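/- arXiv:1210.5269 — 5 statements merged into one kernel-verified Lean document; each statement's English description precedes it below -/
import Mathlib

section
/- Let Ω ⊆ ℝ × (0,∞), let M, V : Ω → ℝ and f, p : Ω → ℂ be smooth with 2M(t,r) < r on Ω, and write Φ = 1 − 2M/r. Suppose f and p satisfy the first-order Klein–Gordon system: f_t = p e^V √Φ and p_t = e^V(−Υ² f Φ^{−1/2} + (2f_r/r)√Φ) + ∂_r(e^V f_r √Φ). Define μ = μ₀(|f|² + Φ(|f_r|² + |p|²)/Υ²), ρ = (2μ₀/Υ²) Φ Re(f_r · conj(p)), and P = μ₀(−|f|² + Φ(|f_r|² + |p|²)/Υ²). Then the energy conservation equation (the dt-component of div_g T = 0) holds on Ω: μ_t = 2ρ e^V √Φ (V_r + 1/r) + ρ_r e^V √Φ − (M_t/r) Φ^{−1}(μ + P). -/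
section Helpers
open Real Function


noncomputable section
variable {E : Type*} [NormedAddCommGroup E] [NormedSpace ℝ E]

lemma hasDerivAt_uncurry_t (F : ℝ → ℝ → E) {Ω : Set (ℝ×ℝ)} (hΩ : IsOpen Ω)
    (hF : ContDiffOn ℝ (⊤ : ℕ∞) (uncurry F) Ω) {t r : ℝ} (h : (t,r) ∈ Ω) :
    HasDerivAt (fun t' => F t' r) (fderiv ℝ (uncurry F) (t,r) (1,0)) t := by
  have hd : DifferentiableAt ℝ (uncurry F) (t,r) :=
    (hF.contDiffAt (hΩ.mem_nhds h)).differentiableAt (by simp)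
  have h1 : HasDerivAt (fun t' : ℝ => (t', r)) ((1:ℝ), (0:ℝ)) t :=
    (hasDerivAt_id t).prodMk (hasDerivAt_const t r)
  exact hd.hasFDerivAt.comp_hasDerivAt t h1

lemma hasDerivAt_uncurry_r (F : ℝ → ℝ → E) {Ω : Set (ℝ×ℝ)} (hΩ : IsOpen Ω)
    (hF : ContDiffOn ℝ (⊤ : ℕ∞) (uncurry F) Ω) {t r : ℝ} (h : (t,r) ∈ Ω) :
    HasDerivAt (fun r' => F t r') (fderiv ℝ (uncurry F) (t,r) (0,1)) r := by
  have hd : DifferentiableAt ℝ (uncurry F) (t,r) :=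
    (hF.contDiffAt (hΩ.mem_nhds h)).differentiableAt (by simp)
  have h1 : HasDerivAt (fun r' : ℝ => (t, r')) ((0:ℝ), (1:ℝ)) r :=
    (hasDerivAt_const r t).prodMk (hasDerivAt_id r)
  exact hd.hasFDerivAt.comp_hasDerivAt r h1
end

noncomputable section
variable {E : Type*} [NormedAddCommGroup E] [NormedSpace ℝ E]

lemma hasDerivAt_fderiv_t (F : ℝ → ℝ → E) {Ω : Set (ℝ×ℝ)} (hΩ : IsOpen Ω)
    (hF : ContDiffOn ℝ (⊤ : ℕ∞) (uncurry F) Ω) {t r : ℝ} (h : (t,r) ∈ Ω) (w : ℝ × ℝ) :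
    HasDerivAt (fun t' : ℝ => fderiv ℝ (uncurry F) (t', r) w)
      (fderiv ℝ (fderiv ℝ (uncurry F)) (t,r) (1,0) w) t := by
  have hG : ContDiffOn ℝ (⊤ : ℕ∞) (fderiv ℝ (uncurry F)) Ω :=
    hF.fderiv_of_isOpen hΩ (by simp)
  have hd : DifferentiableAt ℝ (fderiv ℝ (uncurry F)) (t,r) :=
    (hG.contDiffAt (hΩ.mem_nhds h)).differentiableAt (by simp)
  have h1 : HasDerivAt (fun t' : ℝ => (t', r)) ((1:ℝ), (0:ℝ)) t :=
    (hasDerivAt_id t).prodMk (hasDerivAt_const t r)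
  have h2 : HasDerivAt (fun t' : ℝ => fderiv ℝ (uncurry F) (t', r))
      (fderiv ℝ (fderiv ℝ (uncurry F)) (t,r) (1,0)) t :=
    hd.hasFDerivAt.comp_hasDerivAt t h1
  simpa using h2.clm_apply (hasDerivAt_const t w)

lemma hasDerivAt_fderiv_r (F : ℝ → ℝ → E) {Ω : Set (ℝ×ℝ)} (hΩ : IsOpen Ω)
    (hF : ContDiffOn ℝ (⊤ : ℕ∞) (uncurry F) Ω) {t r : ℝ} (h : (t,r) ∈ Ω) (w : ℝ × ℝ) :
    HasDerivAt (fun r' : ℝ => fderiv ℝ (uncurry F) (t, r') w)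
      (fderiv ℝ (fderiv ℝ (uncurry F)) (t,r) (0,1) w) r := by
  have hG : ContDiffOn ℝ (⊤ : ℕ∞) (fderiv ℝ (uncurry F)) Ω :=
    hF.fderiv_of_isOpen hΩ (by simp)
  have hd : DifferentiableAt ℝ (fderiv ℝ (uncurry F)) (t,r) :=
    (hG.contDiffAt (hΩ.mem_nhds h)).differentiableAt (by simp)
  have h1 : HasDerivAt (fun r' : ℝ => (t, r')) ((0:ℝ), (1:ℝ)) r :=
    (hasDerivAt_const r t).prodMk (hasDerivAt_id r)
  have h2 : HasDerivAt (fun r' : ℝ => fderiv ℝ (uncurry F) (t, r'))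
      (fderiv ℝ (fderiv ℝ (uncurry F)) (t,r) (0,1)) r :=
    hd.hasFDerivAt.comp_hasDerivAt r h1
  simpa using h2.clm_apply (hasDerivAt_const r w)
end

noncomputable section
variable {E : Type*} [NormedAddCommGroup E] [NormedSpace ℝ E]
variable {F : ℝ → ℝ → E} {Ω : Set (ℝ×ℝ)} {t r : ℝ}

lemma nhds_t (hΩ : IsOpen Ω) (h : (t,r) ∈ Ω) : ∀ᶠ t' in nhds t, (t', r) ∈ Ω := by
  have : Continuous (fun t' : ℝ => (t', r)) := by fun_prop
  exact this.continuousAt.preimage_mem_nhds (hΩ.mem_nhds h)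

lemma nhds_r (hΩ : IsOpen Ω) (h : (t,r) ∈ Ω) : ∀ᶠ r' in nhds r, (t, r') ∈ Ω := by
  have : Continuous (fun r' : ℝ => (t, r')) := by fun_prop
  exact this.continuousAt.preimage_mem_nhds (hΩ.mem_nhds h)

/-- mixed partial: the `t`-derivative of `∂_r F` exists and equals `∂_r (∂_t F)`. -/
lemma hasDerivAt_mixed (hΩ : IsOpen Ω) (hF : ContDiffOn ℝ (⊤ : ℕ∞) (uncurry F) Ω) (h : (t,r) ∈ Ω) :
    HasDerivAt (fun t' => deriv (fun r' => F t' r') r)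
      (deriv (fun r' => deriv (fun t' => F t' r') t) r) t := by
  set f'' := fderiv ℝ (fderiv ℝ (uncurry F)) (t,r) with hf''
  have hsymm : f'' (1,0) (0,1) = f'' (0,1) (1,0) := by
    apply second_derivative_symmetric_of_eventually (f := uncurry F)
      (f' := fderiv ℝ (uncurry F)) (x := (t,r))
    · filter_upwards [hΩ.mem_nhds h] with y hy
      exact ((hF.contDiffAt (hΩ.mem_nhds hy)).differentiableAt (by simp)).hasFDerivAt
    · exact (((hF.fderiv_of_isOpen (m := ((⊤ : ℕ∞) : WithTop ℕ∞)) hΩ (by simp)).contDiffAt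
        (hΩ.mem_nhds h)).differentiableAt (by simp : ((⊤ : ℕ∞) : WithTop ℕ∞) ≠ 0)).hasFDerivAt
  have hA : HasDerivAt (fun t' => deriv (fun r' => F t' r') r) (f'' (1,0) (0,1)) t := by
    apply (hasDerivAt_fderiv_t F hΩ hF h (0,1)).congr_of_eventuallyEq
    filter_upwards [nhds_t hΩ h] with t' ht'
    exact (hasDerivAt_uncurry_r F hΩ hF ht').deriv
  have hB : HasDerivAt (fun r' => deriv (fun t' => F t' r') t) (f'' (0,1) (1,0)) r := by
    apply (hasDerivAt_fderiv_r F hΩ hF h (1,0)).congr_of_eventuallyEq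
    filter_upwards [nhds_r hΩ h] with r' hr'
    exact (hasDerivAt_uncurry_t F hΩ hF hr').deriv
  rw [hB.deriv, ← hsymm]
  exact hA

/-- the second radial derivative exists. -/
lemma hasDerivAt_derivR (hΩ : IsOpen Ω) (hF : ContDiffOn ℝ (⊤ : ℕ∞) (uncurry F) Ω) (h : (t,r) ∈ Ω) :
    HasDerivAt (fun r' => deriv (fun s => F t s) r')
      (deriv (fun r' => deriv (fun s => F t s) r') r) r := by
  have hA : HasDerivAt (fun r' => deriv (fun s => F t s) r')
      (fderiv ℝ (fderiv ℝ (uncurry F)) (t,r) (0,1) (0,1)) r := by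
    apply (hasDerivAt_fderiv_r F hΩ hF h (0,1)).congr_of_eventuallyEq
    filter_upwards [nhds_r hΩ h] with r' hr'
    exact (hasDerivAt_uncurry_r F hΩ hF hr').deriv
  rw [hA.deriv]; exact hA
end

noncomputable section
open Complex in
lemma HasDerivAt.cnormSq {g : ℝ → ℂ} {g' : ℂ} {x : ℝ} (h : HasDerivAt g g' x) :
    HasDerivAt (fun y => ‖g y‖^2) (2*(g' * (starRingEnd ℂ) (g x)).re) x := by
  have hre : HasDerivAt (fun y => (g y).re) g'.re x :=
    Complex.reCLM.hasFDerivAt.comp_hasDerivAt x h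
  have him : HasDerivAt (fun y => (g y).im) g'.im x :=
    Complex.imCLM.hasFDerivAt.comp_hasDerivAt x h
  have h2 := (hre.mul hre).add (him.mul him)
  have heq : (fun y => ‖g y‖^2) = fun y => (g y).re*(g y).re + (g y).im*(g y).im := by
    funext y
    rw [← Complex.normSq_apply, Complex.normSq_eq_norm_sq]
  rw [heq]
  refine h2.congr_deriv ?_
  simp [Complex.mul_re]
  ring

open Complex in
lemma HasDerivAt.cconj {g : ℝ → ℂ} {g' : ℂ} {x : ℝ} (h : HasDerivAt g g' x) :
    HasDerivAt (fun y => (starRingEnd ℂ) (g y)) ((starRingEnd ℂ) g') x := by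
  have := Complex.conjCLE.toContinuousLinearMap.hasFDerivAt.comp_hasDerivAt x h
  exact this

lemma HasDerivAt.cofReal {g : ℝ → ℝ} {g' : ℝ} {x : ℝ} (h : HasDerivAt g g' x) :
    HasDerivAt (fun y => ((g y : ℝ) : ℂ)) ((g' : ℝ) : ℂ) x := by
  have := Complex.ofRealCLM.hasFDerivAt.comp_hasDerivAt x h
  exact this
end



end Helpers


open Real

noncomputable section

/-- The metric quantity `Φ = 1 - 2M/r`. -/
def Phi (M : ℝ → ℝ → ℝ) (t r : ℝ) : ℝ := 1 - 2 * M t r / r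

/-- Energy density `μ = T(ν_t, ν_t)` of the complex scalar field. -/
def muF (μ₀ Υ : ℝ) (M : ℝ → ℝ → ℝ) (f p : ℝ → ℝ → ℂ) (t r : ℝ) : ℝ :=
  μ₀ * (‖f t r‖ ^ 2 +
    Phi M t r * (‖deriv (fun r' => f t r') r‖ ^ 2 + ‖p t r‖ ^ 2) / Υ ^ 2)

/-- Momentum density `ρ = T(ν_t, ν_r)` of the complex scalar field. -/
def rhoF (μ₀ Υ : ℝ) (M : ℝ → ℝ → ℝ) (f p : ℝ → ℝ → ℂ) (t r : ℝ) : ℝ :=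
  2 * μ₀ / Υ ^ 2 * Phi M t r *
    (deriv (fun r' => f t r') r * (starRingEnd ℂ) (p t r)).re

/-- Radial pressure `P = T(ν_r, ν_r)` of the complex scalar field. -/
def PF (μ₀ Υ : ℝ) (M : ℝ → ℝ → ℝ) (f p : ℝ → ℝ → ℂ) (t r : ℝ) : ℝ :=
  μ₀ * (-‖f t r‖ ^ 2 +
    Phi M t r * (‖deriv (fun r' => f t r') r‖ ^ 2 + ‖p t r‖ ^ 2) / Υ ^ 2)

theorem stmt_7 (Ω : Set (ℝ × ℝ)) (hΩopen : IsOpen Ω)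
    (M V : ℝ → ℝ → ℝ) (f p : ℝ → ℝ → ℂ) (μ₀ Υ : ℝ)
    (hμ₀ : 0 < μ₀) (hΥ : 0 < Υ)
    (hΩ : ∀ x ∈ Ω, (0:ℝ) < x.2)
    (hMsmooth : ContDiffOn ℝ (⊤ : ℕ∞) (Function.uncurry M) Ω)
    (hVsmooth : ContDiffOn ℝ (⊤ : ℕ∞) (Function.uncurry V) Ω)
    (hfsmooth : ContDiffOn ℝ (⊤ : ℕ∞) (Function.uncurry f) Ω)
    (hpsmooth : ContDiffOn ℝ (⊤ : ℕ∞) (Function.uncurry p) Ω)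
    (h2M : ∀ x ∈ Ω, 2 * M x.1 x.2 < x.2)
    (hft : ∀ t r, (t, r) ∈ Ω →
      deriv (fun t' => f t' r) t =
        p t r * (Real.exp (V t r) : ℂ) * (Real.sqrt (Phi M t r) : ℂ))
    (hpt : ∀ t r, (t, r) ∈ Ω →
      deriv (fun t' => p t' r) t =
        (Real.exp (V t r) : ℂ) *
          (-(Υ : ℂ) ^ 2 * f t r * ((Real.sqrt (Phi M t r) : ℂ))⁻¹ +
            2 * deriv (fun r' => f t r') r / (r : ℂ) * (Real.sqrt (Phi M t r) : ℂ)) +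
        deriv (fun r' =>
          (Real.exp (V t r') : ℂ) * deriv (fun s => f t s) r' *
            (Real.sqrt (Phi M t r') : ℂ)) r) :
    ∀ t r, (t, r) ∈ Ω →
      deriv (fun t' => muF μ₀ Υ M f p t' r) t =
        2 * rhoF μ₀ Υ M f p t r * Real.exp (V t r) * Real.sqrt (Phi M t r) *
            (deriv (fun r' => V t r') r + 1 / r) +
          deriv (fun r' => rhoF μ₀ Υ M f p t r') r * Real.exp (V t r) *
            Real.sqrt (Phi M t r) -
          deriv (fun t' => M t' r) t / r * (Phi M t r)⁻¹ *
            (muF μ₀ Υ M f p t r + PF μ₀ Υ M f p t r) := by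
  intro t r htr
  have hr : (0:ℝ) < r := hΩ _ htr
  have hΦ : (0:ℝ) < Phi M t r := by
    have := h2M _ htr
    simp only [Phi]
    rw [sub_pos, div_lt_one hr]
    exact this
  set s := Real.sqrt (Phi M t r) with hs_def
  have hs : (0:ℝ) < s := Real.sqrt_pos.mpr hΦ
  have hss : s ^ 2 = Phi M t r := Real.sq_sqrt hΦ.le
  set e := Real.exp (V t r) with he_def
  have he : (0:ℝ) < e := Real.exp_pos _
  -- basic partial derivatives
  set a := f t r with ha_def
  set b := p t r with hb_def
  set c := deriv (fun r' => f t r') r with hc_def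
  set ft := deriv (fun t' => f t' r) t with hft_def
  set pt := deriv (fun t' => p t' r) t with hpt_def
  set pr := deriv (fun r' => p t r') r with hpr_def
  set frr := deriv (fun r' => deriv (fun s => f t s) r') r with hfrr_def
  set ftr := deriv (fun r' => deriv (fun t' => f t' r') t) r with hftr_def
  set Vr := deriv (fun r' => V t r') r with hVr_def
  set Mt := deriv (fun t' => M t' r) t with hMt_def
  set Φr := deriv (fun r' => Phi M t r') r with hΦr_def
  have hfr : HasDerivAt (fun r' => f t r') c r :=
    (hasDerivAt_uncurry_r f hΩopen hfsmooth htr).differentiableAt.hasDerivAt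
  have hpr : HasDerivAt (fun r' => p t r') pr r :=
    (hasDerivAt_uncurry_r p hΩopen hpsmooth htr).differentiableAt.hasDerivAt
  have hVr : HasDerivAt (fun r' => V t r') Vr r :=
    (hasDerivAt_uncurry_r V hΩopen hVsmooth htr).differentiableAt.hasDerivAt
  have hMr : HasDerivAt (fun r' => M t r') (deriv (fun r' => M t r') r) r :=
    (hasDerivAt_uncurry_r M hΩopen hMsmooth htr).differentiableAt.hasDerivAt
  have hMt : HasDerivAt (fun t' => M t' r) Mt t :=
    (hasDerivAt_uncurry_t M hΩopen hMsmooth htr).differentiableAt.hasDerivAt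
  have hfT : HasDerivAt (fun t' => f t' r) ft t :=
    (hasDerivAt_uncurry_t f hΩopen hfsmooth htr).differentiableAt.hasDerivAt
  have hpT : HasDerivAt (fun t' => p t' r) pt t :=
    (hasDerivAt_uncurry_t p hΩopen hpsmooth htr).differentiableAt.hasDerivAt
  have hfrr : HasDerivAt (fun r' => deriv (fun s => f t s) r') frr r :=
    hasDerivAt_derivR hΩopen hfsmooth htr
  have hmix : HasDerivAt (fun t' => deriv (fun r' => f t' r') r) ftr t :=
    hasDerivAt_mixed hΩopen hfsmooth htr
  -- Phi derivatives
  have hΦr : HasDerivAt (fun r' => Phi M t r') Φr r := by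
    have h0 : HasDerivAt (fun r' => 1 - 2 * M t r' / r') _ r :=
      ((hMr.const_mul 2).div (hasDerivAt_id r) hr.ne').const_sub 1
    have h1 : HasDerivAt (fun r' => Phi M t r')
        (-((2 * deriv (fun r' => M t r') r * r - 2 * M t r * 1) / r ^ 2)) r := by
      simpa [Phi] using h0
    exact h1.differentiableAt.hasDerivAt
  have hΦt : HasDerivAt (fun t' => Phi M t' r) (-(2 * Mt / r)) t := by
    have h0 : HasDerivAt (fun t' => 1 - 2 * M t' r / r) (-(2 * Mt / r)) t := by
      simpa using ((hMt.const_mul 2).div_const r).const_sub 1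
    simpa [Phi] using h0
  -- sqrt and exp derivatives in r
  have hsr : HasDerivAt (fun r' => Real.sqrt (Phi M t r')) (Φr / (2 * s)) r :=
    hΦr.sqrt hΦ.ne'
  have her : HasDerivAt (fun r' => Real.exp (V t r')) (e * Vr) r := hVr.exp
  -- complex equation for ft
  have Eft : ft = b * (e:ℂ) * (s:ℂ) := hft t r htr
  -- complex equation for ftr (uses Clairaut through hmix and hft on a neighborhood)
  have Eftr : ftr = (pr * (e:ℂ) + b * (e * Vr : ℝ)) * (s:ℂ) + b * (e:ℂ) * ((Φr / (2*s) : ℝ):ℂ) := by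
    have heq : (fun r' => deriv (fun t' => f t' r') t)
        =ᶠ[nhds r] (fun r' => p t r' * (Real.exp (V t r') : ℂ) * (Real.sqrt (Phi M t r') : ℂ)) := by
      filter_upwards [nhds_r hΩopen htr] with r' h'
      exact hft t r' h'
    have hprod : HasDerivAt
        (fun r' => p t r' * (Real.exp (V t r') : ℂ) * (Real.sqrt (Phi M t r') : ℂ))
        ((pr * (e:ℂ) + b * (e * Vr : ℝ)) * (s:ℂ) + b * (e:ℂ) * ((Φr / (2*s) : ℝ):ℂ)) r := by
      exact (hpr.mul her.cofReal).mul hsr.cofReal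
    rw [hftr_def, heq.deriv_eq]
    exact hprod.deriv
  -- complex equation for pt
  have Ept : pt = (e:ℂ) * (-(Υ:ℂ)^2 * a * ((s:ℂ))⁻¹ + 2 * c / (r:ℂ) * (s:ℂ)) +
      (((e * Vr : ℝ):ℂ) * c + (e:ℂ) * frr) * (s:ℂ) + (e:ℂ) * c * ((Φr / (2*s) : ℝ):ℂ) := by
    have hD : HasDerivAt
        (fun r' => (Real.exp (V t r') : ℂ) * deriv (fun s => f t s) r' * (Real.sqrt (Phi M t r') : ℂ))
        ((((e * Vr : ℝ):ℂ) * c + (e:ℂ) * frr) * (s:ℂ) + (e:ℂ) * c * ((Φr / (2*s) : ℝ):ℂ)) r := by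
      exact (her.cofReal.mul hfrr).mul hsr.cofReal
    rw [hpt_def, hpt t r htr, hD.deriv]
    rw [← hs_def, ← he_def, ← ha_def, ← hc_def]
    ring
  -- derivative of muF in t
  have hmu : HasDerivAt (fun t' => muF μ₀ Υ M f p t' r)
      (μ₀ * (2*(ft * (starRingEnd ℂ) a).re +
        ((-(2 * Mt / r)) * (‖c‖^2 + ‖b‖^2) +
          Phi M t r * (2*(ftr * (starRingEnd ℂ) c).re + 2*(pt * (starRingEnd ℂ) b).re)) / Υ^2)) t := by
    simp only [muF]
    exact ((hfT.cnormSq.add ((hΦt.mul (hmix.cnormSq.add hpT.cnormSq)).div_const (Υ^2))).const_mul μ₀)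
  -- derivative of rhoF in r
  have hrho : HasDerivAt (fun r' => rhoF μ₀ Υ M f p t r')
      (2 * μ₀ / Υ^2 * Φr * (c * (starRingEnd ℂ) b).re +
        2 * μ₀ / Υ^2 * Phi M t r * (frr * (starRingEnd ℂ) b + c * (starRingEnd ℂ) pr).re) r := by
    simp only [rhoF]
    have hre : HasDerivAt (fun r' => (deriv (fun s => f t s) r' * (starRingEnd ℂ) (p t r')).re)
        ((frr * (starRingEnd ℂ) b + c * (starRingEnd ℂ) pr).re) r :=
      Complex.reCLM.hasFDerivAt.comp_hasDerivAt r (hfrr.mul hpr.cconj)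
    have := (hΦr.const_mul (2 * μ₀ / Υ^2)).mul hre
    convert this using 1
    all_goals rfl
  rw [hmu.deriv, hrho.deriv]
  simp only [muF, rhoF, PF, ← hc_def, ← ha_def, ← hb_def, ← hs_def, ← he_def, ← hVr_def,
    ← hMt_def]
  rw [Eft, Eftr, Ept]
  simp only [div_eq_mul_inv, ← Complex.ofReal_inv, ← Complex.ofReal_pow,
    Complex.sq_norm, Complex.normSq_apply,
    Complex.mul_re, Complex.mul_im, Complex.add_re, Complex.add_im, Complex.neg_re,
    Complex.neg_im, Complex.ofReal_re, Complex.ofReal_im, Complex.conj_re, Complex.conj_im,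
      Complex.re_ofNat, Complex.im_ofNat]
  rw [← hss]
  field_simp
  ring

end
end

section
/- Let Ω ⊆ ℝ × (0,∞), let M, V : Ω → ℝ and f, p : Ω → ℂ be smooth with 2M(t,r) < r on Ω, and write Φ = 1 − 2M/r. Suppose f and p satisfy the first-order Klein–Gordon system: f_t = p e^V √Φ and p_t = e^V(−Υ² f Φ^{−1/2} + (2f_r/r)√Φ) + ∂_r(e^V f_r √Φ). Define μ = μ₀(|f|² + Φ(|f_r|² + |p|²)/Υ²), ρ = (2μ₀/Υ²) Φ Re(f_r · conj(p)), P = μ₀(−|f|² + Φ(|f_r|² + |p|²)/Υ²), and Q = −μ₀(|f|² + Φ(|f_r|² − |p|²)/Υ²). Then the momentum conservation equation (the dr-component of div_g T = 0) holds on Ω: ρ_t = e^V √Φ (V_r(μ + P) + P_r + 2(P − Q)/r) − (2ρ M_t/r) Φ^{−1}. -/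
open Real

noncomputable section

open Function

variable {E : Type*} [NormedAddCommGroup E] [NormedSpace ℝ E]

lemma pdiff_snd {g : ℝ → ℝ → E} {Ω : Set (ℝ × ℝ)} (hΩ : IsOpen Ω)
    (hg : ContDiffOn ℝ (⊤ : ℕ∞) (uncurry g) Ω) {t r : ℝ} (h : (t, r) ∈ Ω) :
    HasDerivAt (fun r' => g t r') (fderiv ℝ (uncurry g) (t, r) (0, 1)) r := by
  have hd : DifferentiableAt ℝ (uncurry g) (t, r) :=
    (hg.contDiffAt (hΩ.mem_nhds h)).differentiableAt (by simp)
  have h2 : HasDerivAt (fun r' : ℝ => ((t, r') : ℝ × ℝ)) (0, 1) r :=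
    (hasDerivAt_const r t).prodMk (hasDerivAt_id r)
  exact hd.hasFDerivAt.comp_hasDerivAt r h2

lemma pdiff_fst {g : ℝ → ℝ → E} {Ω : Set (ℝ × ℝ)} (hΩ : IsOpen Ω)
    (hg : ContDiffOn ℝ (⊤ : ℕ∞) (uncurry g) Ω) {t r : ℝ} (h : (t, r) ∈ Ω) :
    HasDerivAt (fun t' => g t' r) (fderiv ℝ (uncurry g) (t, r) (1, 0)) t := by
  have hd : DifferentiableAt ℝ (uncurry g) (t, r) :=
    (hg.contDiffAt (hΩ.mem_nhds h)).differentiableAt (by simp)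
  have h2 : HasDerivAt (fun t' : ℝ => ((t', r) : ℝ × ℝ)) (1, 0) t :=
    (hasDerivAt_id t).prodMk (hasDerivAt_const t r)
  exact hd.hasFDerivAt.comp_hasDerivAt t h2

lemma fderiv_smoothOn {g : ℝ → ℝ → E} {Ω : Set (ℝ × ℝ)} (hΩ : IsOpen Ω)
    (hg : ContDiffOn ℝ (⊤ : ℕ∞) (uncurry g) Ω) :
    ContDiffOn ℝ (⊤ : ℕ∞) (fderiv ℝ (uncurry g)) Ω := by
  have := hg.fderiv_of_isOpen hΩ (m := (⊤ : ℕ∞)) (by simp)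
  exact this

/-- second partial in `r` exists -/
lemma pdiff2_snd {g : ℝ → ℝ → E} {Ω : Set (ℝ × ℝ)} (hΩ : IsOpen Ω)
    (hg : ContDiffOn ℝ (⊤ : ℕ∞) (uncurry g) Ω) {t r : ℝ} (h : (t, r) ∈ Ω) :
    ∃ K : E, HasDerivAt (fun r' => deriv (fun s => g t s) r') K r := by
  have hmem : ∀ᶠ r' in nhds r, (t, r') ∈ Ω := by
    have : ContinuousAt (fun r' : ℝ => ((t, r') : ℝ × ℝ)) r :=
      (continuous_const.prodMk continuous_id).continuousAt
    exact this (hΩ.mem_nhds h)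
  have hev : (fun r' => deriv (fun s => g t s) r')
      =ᶠ[nhds r] fun r' => fderiv ℝ (uncurry g) (t, r') (0, 1) :=
    hmem.mono fun r' hr' => (pdiff_snd hΩ hg hr').deriv
  have hB : DifferentiableAt ℝ (fderiv ℝ (uncurry g)) (t, r) :=
    ((fderiv_smoothOn hΩ hg).contDiffAt (hΩ.mem_nhds h)).differentiableAt (by simp)
  have h2 : HasDerivAt (fun r' : ℝ => ((t, r') : ℝ × ℝ)) (0, 1) r :=
    (hasDerivAt_const r t).prodMk (hasDerivAt_id r)
  have h3 : HasDerivAt (fun r' => fderiv ℝ (uncurry g) (t, r'))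
      (fderiv ℝ (fderiv ℝ (uncurry g)) (t, r) (0, 1)) r :=
    hB.hasFDerivAt.comp_hasDerivAt r h2
  have h4 := (ContinuousLinearMap.apply ℝ E ((0 : ℝ), (1 : ℝ))).hasFDerivAt.comp_hasDerivAt r h3
  exact ⟨_, h4.congr_of_eventuallyEq hev⟩

/-- mixed partials: common value -/
lemma pdiff_mixed {g : ℝ → ℝ → E} {Ω : Set (ℝ × ℝ)} (hΩ : IsOpen Ω)
    (hg : ContDiffOn ℝ (⊤ : ℕ∞) (uncurry g) Ω) {t r : ℝ} (h : (t, r) ∈ Ω) :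
    ∃ K : E, HasDerivAt (fun t' => deriv (fun r' => g t' r') r) K t ∧
      HasDerivAt (fun r' => deriv (fun t' => g t' r') t) K r := by
  have hmemr : ∀ᶠ r' in nhds r, (t, r') ∈ Ω :=
    ((continuous_const.prodMk continuous_id).continuousAt (x := r)) (hΩ.mem_nhds h)
  have hmemt : ∀ᶠ t' in nhds t, (t', r) ∈ Ω :=
    ((continuous_id.prodMk continuous_const).continuousAt (x := t)) (hΩ.mem_nhds h)
  have hB : DifferentiableAt ℝ (fderiv ℝ (uncurry g)) (t, r) :=
    ((fderiv_smoothOn hΩ hg).contDiffAt (hΩ.mem_nhds h)).differentiableAt (by simp)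
  have hsymm : IsSymmSndFDerivAt ℝ (uncurry g) (t, r) := by
    refine ContDiffAt.isSymmSndFDerivAt (hg.contDiffAt (hΩ.mem_nhds h)) ?_
    rw [minSmoothness_of_isRCLikeNormedField]
    exact WithTop.coe_le_coe.2 (le_top : (2 : ℕ∞) ≤ ⊤)
  -- t-direction
  have hevt : (fun t' => deriv (fun r' => g t' r') r)
      =ᶠ[nhds t] fun t' => fderiv ℝ (uncurry g) (t', r) (0, 1) :=
    hmemt.mono fun t' ht' => (pdiff_snd hΩ hg ht').deriv
  have h2t : HasDerivAt (fun t' : ℝ => ((t', r) : ℝ × ℝ)) (1, 0) t :=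
    (hasDerivAt_id t).prodMk (hasDerivAt_const t r)
  have h3t : HasDerivAt (fun t' => fderiv ℝ (uncurry g) (t', r))
      (fderiv ℝ (fderiv ℝ (uncurry g)) (t, r) (1, 0)) t :=
    hB.hasFDerivAt.comp_hasDerivAt t h2t
  have h4t := (ContinuousLinearMap.apply ℝ E ((0 : ℝ), (1 : ℝ))).hasFDerivAt.comp_hasDerivAt t h3t
  -- r-direction
  have hevr : (fun r' => deriv (fun t' => g t' r') t)
      =ᶠ[nhds r] fun r' => fderiv ℝ (uncurry g) (t, r') (1, 0) :=
    hmemr.mono fun r' hr' => (pdiff_fst hΩ hg hr').deriv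
  have h2r : HasDerivAt (fun r' : ℝ => ((t, r') : ℝ × ℝ)) (0, 1) r :=
    (hasDerivAt_const r t).prodMk (hasDerivAt_id r)
  have h3r : HasDerivAt (fun r' => fderiv ℝ (uncurry g) (t, r'))
      (fderiv ℝ (fderiv ℝ (uncurry g)) (t, r) (0, 1)) r :=
    hB.hasFDerivAt.comp_hasDerivAt r h2r
  have h4r := (ContinuousLinearMap.apply ℝ E ((1 : ℝ), (0 : ℝ))).hasFDerivAt.comp_hasDerivAt r h3r
  refine ⟨fderiv ℝ (fderiv ℝ (uncurry g)) (t, r) (1, 0) (0, 1),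
    HasDerivAt.congr_of_eventuallyEq ?_ hevt, HasDerivAt.congr_of_eventuallyEq ?_ hevr⟩
  · exact h4t
  · rw [hsymm (1, 0) (0, 1)]
    exact h4r

lemma hasDerivAt_normsq {q : ℝ → ℂ} {q' : ℂ} {x : ℝ} (h : HasDerivAt q q' x) :
    HasDerivAt (fun y => ‖q y‖ ^ 2)
      ((q' * (starRingEnd ℂ) (q x) + q x * (starRingEnd ℂ) q').re) x := by
  have h2 := h.mul h.star
  have h3 := Complex.reCLM.hasFDerivAt.comp_hasDerivAt x h2
  have heq : (fun y => ‖q y‖ ^ 2) = fun y => Complex.reCLM (q y * star (q y)) := by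
    funext y
    rw [Complex.reCLM_apply, Complex.star_def, Complex.mul_conj,
      Complex.sq_norm]
    simp
  have h4 : HasDerivAt (fun y => Complex.reCLM (q y * star (q y)))
      (Complex.reCLM (q' * star (q x) + q x * star q')) x := h3
  rw [heq]
  simpa only [Complex.reCLM_apply, starRingEnd_apply] using h4


/-- Angular pressure `Q = T(ν_θ, ν_θ)` of the complex scalar field. -/
def QF (μ₀ Υ : ℝ) (M : ℝ → ℝ → ℝ) (f p : ℝ → ℝ → ℂ) (t r : ℝ) : ℝ :=
  -μ₀ * (‖f t r‖ ^ 2 +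
    Phi M t r * (‖deriv (fun r' => f t r') r‖ ^ 2 - ‖p t r‖ ^ 2) / Υ ^ 2)

set_option maxHeartbeats 2000000 in
theorem stmt_8 (Ω : Set (ℝ × ℝ)) (hΩopen : IsOpen Ω)
    (M V : ℝ → ℝ → ℝ) (f p : ℝ → ℝ → ℂ) (μ₀ Υ : ℝ)
    (hμ₀ : 0 < μ₀) (hΥ : 0 < Υ)
    (hΩ : ∀ x ∈ Ω, (0:ℝ) < x.2)
    (hMsmooth : ContDiffOn ℝ (⊤ : ℕ∞) (Function.uncurry M) Ω)
    (hVsmooth : ContDiffOn ℝ (⊤ : ℕ∞) (Function.uncurry V) Ω)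
    (hfsmooth : ContDiffOn ℝ (⊤ : ℕ∞) (Function.uncurry f) Ω)
    (hpsmooth : ContDiffOn ℝ (⊤ : ℕ∞) (Function.uncurry p) Ω)
    (h2M : ∀ x ∈ Ω, 2 * M x.1 x.2 < x.2)
    (hft : ∀ t r, (t, r) ∈ Ω →
      deriv (fun t' => f t' r) t =
        p t r * (Real.exp (V t r) : ℂ) * (Real.sqrt (Phi M t r) : ℂ))
    (hpt : ∀ t r, (t, r) ∈ Ω →
      deriv (fun t' => p t' r) t =
        (Real.exp (V t r) : ℂ) *
          (-(Υ : ℂ) ^ 2 * f t r * ((Real.sqrt (Phi M t r) : ℂ))⁻¹ +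
            2 * deriv (fun r' => f t r') r / (r : ℂ) * (Real.sqrt (Phi M t r) : ℂ)) +
        deriv (fun r' =>
          (Real.exp (V t r') : ℂ) * deriv (fun s => f t s) r' *
            (Real.sqrt (Phi M t r') : ℂ)) r) :
    ∀ t r, (t, r) ∈ Ω →
      deriv (fun t' => rhoF μ₀ Υ M f p t' r) t =
        Real.exp (V t r) * Real.sqrt (Phi M t r) *
            (deriv (fun r' => V t r') r * (muF μ₀ Υ M f p t r + PF μ₀ Υ M f p t r) +
              deriv (fun r' => PF μ₀ Υ M f p t r') r +
              2 * (PF μ₀ Υ M f p t r - QF μ₀ Υ M f p t r) / r) -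
          2 * rhoF μ₀ Υ M f p t r * deriv (fun t' => M t' r) t / r *
            (Phi M t r)⁻¹ := by
  intro t r htr
  have hr : 0 < r := hΩ _ htr
  have hΦ0 : 0 < Phi M t r := by
    have h2 := h2M _ htr
    have h3 : 2 * M t r / r < 1 := (div_lt_one hr).2 h2
    unfold Phi; linarith
  have hmemr : ∀ᶠ r' in nhds r, (t, r') ∈ Ω :=
    ((continuous_const.prodMk continuous_id).continuousAt (x := r)) (hΩopen.mem_nhds htr)
  -- first partial derivatives
  obtain ⟨Mt, hMt⟩ : ∃ d, HasDerivAt (fun t' => M t' r) d t := ⟨_, pdiff_fst hΩopen hMsmooth htr⟩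
  obtain ⟨Mr, hMr⟩ : ∃ d, HasDerivAt (fun r' => M t r') d r := ⟨_, pdiff_snd hΩopen hMsmooth htr⟩
  obtain ⟨Vr, hVr⟩ : ∃ d, HasDerivAt (fun r' => V t r') d r := ⟨_, pdiff_snd hΩopen hVsmooth htr⟩
  obtain ⟨Fr, hFr⟩ : ∃ d, HasDerivAt (fun r' => f t r') d r := ⟨_, pdiff_snd hΩopen hfsmooth htr⟩
  obtain ⟨Pr, hPr⟩ : ∃ d, HasDerivAt (fun r' => p t r') d r := ⟨_, pdiff_snd hΩopen hpsmooth htr⟩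
  obtain ⟨Pt, hPt⟩ : ∃ d, HasDerivAt (fun t' => p t' r) d t := ⟨_, pdiff_fst hΩopen hpsmooth htr⟩
  obtain ⟨Frr, hFrr⟩ := pdiff2_snd hΩopen hfsmooth htr
  obtain ⟨Ftr, hFtrT, hFtrR⟩ := pdiff_mixed hΩopen hfsmooth htr
  -- Phi derivatives
  obtain ⟨Φr, hΦr⟩ : ∃ d, HasDerivAt (fun r' => Phi M t r') d r := by
    have h0 := ((hMr.const_mul 2).div (hasDerivAt_id r) hr.ne').const_sub 1
    have hev : (fun r' => Phi M t r') =ᶠ[nhds r] (fun r' => 1 - 2 * M t r' / id r') :=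
      Filter.Eventually.of_forall fun x => by simp [Phi]
    exact ⟨_, h0.congr_of_eventuallyEq hev⟩
  have hΦt : HasDerivAt (fun t' => Phi M t' r) (-(2 * Mt / r)) t := by
    have := ((hMt.const_mul 2).div_const r).const_sub 1
    simpa [Phi] using this
  -- sqrt and exp
  set s := Real.sqrt (Phi M t r) with hsdef
  have hs0 : 0 < s := Real.sqrt_pos.2 hΦ0
  have hs2 : s ^ 2 = Phi M t r := Real.sq_sqrt hΦ0.le
  set e := Real.exp (V t r) with hedef
  have hexp : HasDerivAt (fun r' => Real.exp (V t r')) (e * Vr) r :=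
    (Real.hasDerivAt_exp (V t r)).comp r hVr
  have hexpC := hexp.ofReal_comp
  have hsq : HasDerivAt (fun r' => Real.sqrt (Phi M t r')) (Φr / (2 * s)) r := by
    have h0 := (Real.hasDerivAt_sqrt hΦ0.ne').comp r hΦr
    have h1 : Φr / (2 * s) = 1 / (2 * √(Phi M t r)) * Φr := by
      rw [hsdef]; ring
    rw [h1]; exact h0
  have hsqC := hsq.ofReal_comp
  -- value of Ftr via Clairaut + field equation for f
  have hg0 := (hPr.mul hexpC).mul hsqC
  simp only [Pi.mul_apply] at hg0
  have hEvFt : (fun r' => deriv (fun t' => f t' r') t) =ᶠ[nhds r]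
      (fun r' => p t r' * (Real.exp (V t r') : ℂ) * (Real.sqrt (Phi M t r') : ℂ)) :=
    hmemr.mono fun r' h' => hft t r' h'
  have hFtrEq := (hFtrR.congr_of_eventuallyEq hEvFt.symm).unique hg0
  -- value of Pt via field equation for p
  have hprod : HasDerivAt (fun r' => (Real.exp (V t r') : ℂ) * deriv (fun s => f t s) r' *
      (Real.sqrt (Phi M t r') : ℂ)) _ r := (hexpC.mul hFrr).mul hsqC
  simp only [Pi.mul_apply] at hprod
  have hPtval := hpt t r htr
  rw [hPt.deriv, hprod.deriv, hFr.deriv, ← hsdef, ← hedef] at hPtval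
  -- tidy complex values
  have hsne : (s : ℂ) ≠ 0 := Complex.ofReal_ne_zero.2 hs0.ne'
  have hrne : (r : ℂ) ≠ 0 := Complex.ofReal_ne_zero.2 hr.ne'
  have hFtr2 : Ftr = ((e * s : ℝ) : ℂ) * Pr +
      ((e * Vr * s + e * Φr / (2 * s) : ℝ) : ℂ) * p t r := by
    rw [hFtrEq, ← hsdef, ← hedef]
    push_cast
    field_simp
    ring
  have hPT2 : Pt = ((e / s * Υ ^ 2 : ℝ) : ℂ) * (-(f t r)) +
      ((2 * e * s / r + e * Vr * s + e * Φr / (2 * s) : ℝ) : ℂ) * Fr +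
      ((e * s : ℝ) : ℂ) * Frr := by
    rw [hPtval]
    push_cast
    field_simp
    ring
  -- LHS: time derivative of rho
  have hstar := hPt.star
  have hmul2 := hFtrT.mul hstar
  have hre0 := Complex.reCLM.hasFDerivAt.comp_hasDerivAt t hmul2
  have hre : HasDerivAt (fun t' => (deriv (fun r' => f t' r') r * (starRingEnd ℂ) (p t' r)).re)
      ((Ftr * (starRingEnd ℂ) (p t r) + deriv (fun r' => f t r') r * (starRingEnd ℂ) Pt).re) t := by
    simpa only [Complex.reCLM_apply, starRingEnd_apply, Function.comp_def, Pi.mul_apply] using hre0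
  have hA : HasDerivAt (fun t' => 2 * μ₀ / Υ ^ 2 * Phi M t' r)
      (2 * μ₀ / Υ ^ 2 * -(2 * Mt / r)) t := hΦt.const_mul _
  have hL : HasDerivAt (fun t' => 2 * μ₀ / Υ ^ 2 * Phi M t' r *
      (deriv (fun r' => f t' r') r * (starRingEnd ℂ) (p t' r)).re) _ t := hA.mul hre
  -- RHS: radial derivative of P
  have hn1 := hasDerivAt_normsq hFr
  have hn2 := hasDerivAt_normsq hFrr
  have hn3 := hasDerivAt_normsq hPr
  have hPFr : HasDerivAt (fun r' => μ₀ * (-‖f t r'‖ ^ 2 + Phi M t r' *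
      (‖deriv (fun r' => f t r') r'‖ ^ 2 + ‖p t r'‖ ^ 2) / Υ ^ 2)) _ r :=
    ((hn1.neg).add ((hΦr.mul (hn2.add hn3)).div_const (Υ ^ 2))).const_mul μ₀
  simp only [Pi.add_apply] at hPFr
  simp only [rhoF, muF, PF, QF]
  rw [hL.deriv, hPFr.deriv, hVr.deriv, hMt.deriv, hFr.deriv, hFtr2, hPT2, ← hs2]
  have hrne' : r ≠ 0 := hr.ne'
  have hsne' : s ≠ 0 := hs0.ne'
  have hΥne : Υ ≠ 0 := hΥ.ne'
  simp only [Complex.star_def, Complex.sq_norm, Complex.normSq_apply,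
    Complex.add_re, Complex.add_im, Complex.neg_re, Complex.neg_im,
    Complex.mul_re, Complex.mul_im, Complex.ofReal_re, Complex.ofReal_im,
    Complex.conj_re, Complex.conj_im]
  field_simp
  ring


end
end

section
/- Let μ, ρ, P : ℝ × [0,∞) → ℝ be smooth and define M(t,r) = ∫₀ʳ 4πs²μ(t,s) ds; assume 2M(t,r) < r for all r > 0, write Φ = 1 − 2M/r, and let V : ℝ × (0,∞) → ℝ be smooth, extending continuously to r = 0, with V_r = Φ^{−1}(M/r² + 4πrP) for r > 0. Suppose the conservation law μ_t = 2ρ e^V √Φ (V_r + 1/r) + ρ_r e^V √Φ − (M_t/r) Φ^{−1}(μ + P) holds for all r > 0. Then the momentum-constraint equation holds automatically: M_t(t,r) = 4πr² e^{V(t,r)} ρ(t,r) √Φ(t,r) for all t and all r > 0. -/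
open Real MeasureTheory Set Function Filter

noncomputable section


lemma aux_uds : UniqueDiffOn ℝ ((Set.univ : Set ℝ) ×ˢ Set.Ici (0:ℝ)) :=
  (uniqueDiffOn_univ : UniqueDiffOn ℝ (Set.univ : Set ℝ)).prod (uniqueDiffOn_Ici 0)

lemma aux_hasDerivAt_t (f : ℝ → ℝ → ℝ)
    (hf : ContDiffOn ℝ (⊤ : ℕ∞) (Function.uncurry f) (Set.univ ×ˢ Set.Ici 0))
    (t s : ℝ) (hs : 0 ≤ s) :
    HasDerivAt (fun t' => f t' s)
      (fderivWithin ℝ (Function.uncurry f) (Set.univ ×ˢ Set.Ici 0) (t, s) (1, 0)) t := by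
  have hd : DifferentiableWithinAt ℝ (Function.uncurry f) (Set.univ ×ˢ Set.Ici 0) (t, s) :=
    (hf.differentiableOn (by simp)) (t, s) ⟨trivial, hs⟩
  have hin : HasDerivWithinAt (fun t' : ℝ => ((t', s) : ℝ × ℝ)) ((1 : ℝ), (0 : ℝ)) Set.univ t :=
    (HasDerivAt.prodMk (hasDerivAt_id t) (hasDerivAt_const t s)).hasDerivWithinAt
  have := hd.hasFDerivWithinAt.comp_hasDerivWithinAt (x := t) hin (fun x _ => show ((x, s) : ℝ × ℝ) ∈ Set.univ ×ˢ Set.Ici (0:ℝ) from ⟨trivial, hs⟩)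
  rw [hasDerivWithinAt_univ] at this
  exact this

lemma aux_cont_fderiv_t (f : ℝ → ℝ → ℝ)
    (hf : ContDiffOn ℝ (⊤ : ℕ∞) (Function.uncurry f) (Set.univ ×ˢ Set.Ici 0)) :
    ContinuousOn
      (fun p : ℝ × ℝ => fderivWithin ℝ (Function.uncurry f) (Set.univ ×ˢ Set.Ici 0) p (1, 0))
      (Set.univ ×ˢ Set.Ici 0) :=
  (hf.continuousOn_fderivWithin aux_uds (by simp)).clm_apply continuousOn_const

lemma aux_cont_slice (f : ℝ → ℝ → ℝ)
    (hf : ContDiffOn ℝ (⊤ : ℕ∞) (Function.uncurry f) (Set.univ ×ˢ Set.Ici 0)) (t : ℝ) :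
    ContinuousOn (fun s => f t s) (Set.Ici 0) :=
  hf.continuousOn.comp ((continuous_const.prodMk continuous_id).continuousOn)
    (fun s hs => ⟨trivial, hs⟩)

lemma aux_hasDerivAt_r (f : ℝ → ℝ → ℝ)
    (hf : ContDiffOn ℝ (⊤ : ℕ∞) (Function.uncurry f) (Set.univ ×ˢ Set.Ioi 0))
    (t r : ℝ) (hr : 0 < r) :
    HasDerivAt (fun r' => f t r') (deriv (fun r' => f t r') r) r := by
  have hA : ContDiffAt ℝ (⊤ : ℕ∞) (Function.uncurry f) (t, r) :=
    hf.contDiffAt ((isOpen_univ.prod isOpen_Ioi).mem_nhds ⟨trivial, hr⟩)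
  have : DifferentiableAt ℝ (fun r' => f t r') r :=
    (hA.differentiableAt (by simp)).comp r (DifferentiableAt.prodMk (differentiableAt_const t) differentiableAt_id)
  exact this.hasDerivAt

/-- Leibniz: differentiating `M` under the integral sign in `t`. -/
lemma aux_leibniz (μ : ℝ → ℝ → ℝ)
    (hμsmooth : ContDiffOn ℝ (⊤ : ℕ∞) (Function.uncurry μ) (Set.univ ×ˢ Set.Ici 0))
    (M : ℝ → ℝ → ℝ)
    (hMdef : ∀ t r, M t r = ∫ s in (0:ℝ)..r, 4 * π * s ^ 2 * μ t s)
    (t r : ℝ) (hr : 0 < r) :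
    HasDerivAt (fun t' => M t' r)
      (∫ s in (0:ℝ)..r, 4 * π * s ^ 2 *
        fderivWithin ℝ (Function.uncurry μ) (Set.univ ×ˢ Set.Ici 0) (t, s) (1, 0)) t := by
  have hfun : (fun t' => M t' r) = fun t' => ∫ s in (0:ℝ)..r, 4 * π * s ^ 2 * μ t' s :=
    funext fun t' => hMdef t' r
  rw [hfun]
  set μT : ℝ → ℝ → ℝ := fun x s =>
    fderivWithin ℝ (Function.uncurry μ) (Set.univ ×ˢ Set.Ici 0) (x, s) (1, 0) with hμT
  have hK : IsCompact (Set.Icc (t - 1) (t + 1) ×ˢ Set.Icc (0:ℝ) r) :=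
    isCompact_Icc.prod isCompact_Icc
  have hKS : Set.Icc (t - 1) (t + 1) ×ˢ Set.Icc (0:ℝ) r ⊆ Set.univ ×ˢ Set.Ici 0 :=
    Set.prod_mono (Set.subset_univ _) Set.Icc_subset_Ici_self
  obtain ⟨C, hC⟩ := hK.exists_bound_of_continuousOn ((aux_cont_fderiv_t μ hμsmooth).mono hKS)
  set C' : ℝ := max C 0 with hC'
  have hC'0 : 0 ≤ C' := le_max_right _ _
  have hIsub : Set.uIoc (0:ℝ) r ⊆ Set.Ici (0:ℝ) := by
    rw [Set.uIoc_of_le hr.le]; exact fun x hx => hx.1.le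
  have hIccsub : Set.uIcc (0:ℝ) r ⊆ Set.Ici (0:ℝ) := by
    rw [Set.uIcc_of_le hr.le]; exact fun x hx => hx.1
  have hcontw : ∀ x : ℝ, ContinuousOn (fun s => 4 * π * s ^ 2 * μ x s) (Set.Ici 0) := fun x =>
    (continuousOn_const.mul ((continuous_pow 2).continuousOn)).mul (aux_cont_slice μ hμsmooth x)
  have key := (intervalIntegral.hasDerivAt_integral_of_dominated_loc_of_deriv_le
    (F := fun x s => 4 * π * s ^ 2 * μ x s) (F' := fun x s => 4 * π * s ^ 2 * μT x s)
    (bound := fun _ => 4 * π * r ^ 2 * C') (a := 0) (b := r) (x₀ := t) (s := Metric.ball t 1) (μ := MeasureTheory.volume) (Metric.ball_mem_nhds t one_pos)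
    (Filter.Eventually.of_forall fun x =>
      (((hcontw x).mono hIsub)).aestronglyMeasurable measurableSet_uIoc)
    (((hcontw t).mono hIccsub).intervalIntegrable)
    ?_ ?_ ?_ ?_).2
  · exact key
  · -- measurability of F' t
    have : ContinuousOn (fun s => 4 * π * s ^ 2 * μT t s) (Set.Ici 0) := by
      refine (continuousOn_const.mul ((continuous_pow 2).continuousOn)).mul ?_
      exact (aux_cont_fderiv_t μ hμsmooth).comp
        ((continuous_const.prodMk continuous_id).continuousOn) (fun s hs => ⟨trivial, hs⟩)
    exact ((this.mono hIsub)).aestronglyMeasurable measurableSet_uIoc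
  · -- bound
    refine Filter.Eventually.of_forall fun s hs x hx => ?_
    rw [Set.uIoc_of_le hr.le] at hs
    have hxmem : (x, s) ∈ Set.Icc (t - 1) (t + 1) ×ˢ Set.Icc (0:ℝ) r := by
      constructor
      · have := Metric.mem_ball.mp hx
        rw [Real.dist_eq] at this
        constructor <;> [linarith [abs_lt.mp this]; linarith [(abs_lt.mp this).2]]
      · exact ⟨hs.1.le, hs.2⟩
    have hb : ‖μT x s‖ ≤ C' := le_trans (hC _ hxmem) (le_max_left _ _)
    have h1 : ‖4 * π * s ^ 2 * μT x s‖ = 4 * π * s ^ 2 * ‖μT x s‖ := by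
      rw [norm_mul, Real.norm_eq_abs (4 * π * s ^ 2), abs_of_nonneg (by positivity)]
    rw [h1]
    have hs2 : s ^ 2 ≤ r ^ 2 := by nlinarith [hs.1, hs.2]
    have hn : (0:ℝ) ≤ ‖μT x s‖ := norm_nonneg _
    have hmm : s ^ 2 * ‖μT x s‖ ≤ r ^ 2 * C' :=
      mul_le_mul hs2 hb hn (by positivity)
    show 4 * π * s ^ 2 * ‖μT x s‖ ≤ 4 * π * r ^ 2 * C'
    nlinarith [pi_pos, hmm]
  · exact intervalIntegrable_const
  · -- differentiability in x
    refine Filter.Eventually.of_forall fun s hs x _ => ?_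
    rw [Set.uIoc_of_le hr.le] at hs
    exact (aux_hasDerivAt_t μ hμsmooth x s hs.1.le).const_mul (4 * π * s ^ 2)



lemma aux_ftc (w : ℝ → ℝ) (hw : ContinuousOn w (Set.Ici 0)) (r : ℝ) (hr : 0 < r) :
    HasDerivAt (fun u => ∫ s in (0:ℝ)..u, w s) (w r) r := by
  refine intervalIntegral.integral_hasDerivAt_right
    ((hw.mono ?_).intervalIntegrable)
    (ContinuousOn.stronglyMeasurableAtFilter isOpen_Ioi (hw.mono Ioi_subset_Ici_self) r hr)
    (hw.continuousAt (mem_of_superset (Ioi_mem_nhds hr) Ioi_subset_Ici_self))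
  rw [Set.uIcc_of_le hr.le]; exact fun x hx => hx.1

lemma aux_ftc1 (w : ℝ → ℝ) (hw : ContinuousOn w (Set.Ioi 0)) (r : ℝ) (hr : 0 < r) :
    HasDerivAt (fun u => ∫ s in (1:ℝ)..u, w s) (w r) r := by
  refine intervalIntegral.integral_hasDerivAt_right
    ((hw.mono ?_).intervalIntegrable)
    (ContinuousOn.stronglyMeasurableAtFilter isOpen_Ioi hw r hr)
    (hw.continuousAt (Ioi_mem_nhds hr))
  exact fun x hx => lt_of_lt_of_le (lt_min one_pos hr) hx.1

end

set_option maxHeartbeats 4000000 in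
theorem stmt_13 (μ ρ P V : ℝ → ℝ → ℝ)
    (hμsmooth : ContDiffOn ℝ (⊤ : ℕ∞) (Function.uncurry μ) (Set.univ ×ˢ Set.Ici 0))
    (hρsmooth : ContDiffOn ℝ (⊤ : ℕ∞) (Function.uncurry ρ) (Set.univ ×ˢ Set.Ici 0))
    (hPsmooth : ContDiffOn ℝ (⊤ : ℕ∞) (Function.uncurry P) (Set.univ ×ˢ Set.Ici 0))
    (M : ℝ → ℝ → ℝ)
    (hMdef : ∀ t r, M t r = ∫ s in (0:ℝ)..r, 4 * π * s ^ 2 * μ t s)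
    (h2M : ∀ t : ℝ, ∀ r > (0:ℝ), 2 * M t r < r)
    (hVsmooth : ContDiffOn ℝ (⊤ : ℕ∞) (Function.uncurry V) (Set.univ ×ˢ Set.Ioi 0))
    (hVcont : ∃ V₀ : ℝ → ℝ, ∀ t : ℝ,
      Filter.Tendsto (fun r => V t r) (nhdsWithin 0 (Set.Ioi 0)) (nhds (V₀ t)))
    (hVr : ∀ t : ℝ, ∀ r > (0:ℝ),
      deriv (fun r' => V t r') r =
        (1 - 2 * M t r / r)⁻¹ * (M t r / r ^ 2 + 4 * π * r * P t r))
    (hcons : ∀ t : ℝ, ∀ r > (0:ℝ),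
      deriv (fun t' => μ t' r) t =
        2 * ρ t r * Real.exp (V t r) * Real.sqrt (1 - 2 * M t r / r) *
            (deriv (fun r' => V t r') r + 1 / r) +
          deriv (fun r' => ρ t r') r * Real.exp (V t r) *
            Real.sqrt (1 - 2 * M t r / r) -
          deriv (fun t' => M t' r) t / r * (1 - 2 * M t r / r)⁻¹ *
            (μ t r + P t r)) :
    ∀ t : ℝ, ∀ r > (0:ℝ),
      deriv (fun t' => M t' r) t =
        4 * π * r ^ 2 * Real.exp (V t r) * ρ t r * Real.sqrt (1 - 2 * M t r / r) := by
  intro t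
  obtain ⟨V₀, hV₀⟩ := hVcont
  -- the time derivative of μ
  set μT : ℝ → ℝ := fun s =>
    fderivWithin ℝ (Function.uncurry μ) (Set.univ ×ˢ Set.Ici 0) (t, s) (1, 0) with hμTdef
  have hμTcont : ContinuousOn μT (Set.Ici 0) :=
    (aux_cont_fderiv_t μ hμsmooth).comp
      ((continuous_const.prodMk continuous_id).continuousOn) (fun s hs => ⟨trivial, hs⟩)
  -- g r = ∂ₜ M
  set g : ℝ → ℝ := fun u => ∫ s in (0:ℝ)..u, 4 * π * s ^ 2 * μT s with hgdef
  have hMt : ∀ r, 0 < r → HasDerivAt (fun t' => M t' r) (g r) t := fun r hr =>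
    aux_leibniz μ hμsmooth M hMdef t r hr
  have hwg : ContinuousOn (fun s => 4 * π * s ^ 2 * μT s) (Set.Ici 0) :=
    (continuousOn_const.mul ((continuous_pow 2).continuousOn)).mul hμTcont
  have hg' : ∀ r, 0 < r → HasDerivAt g (4 * π * r ^ 2 * μT r) r := fun r hr =>
    aux_ftc _ hwg r hr
  have hmc : ContinuousOn (fun s => μ t s) (Set.Ici 0) := aux_cont_slice μ hμsmooth t
  have hPc : ContinuousOn (fun s => P t s) (Set.Ici 0) := aux_cont_slice P hPsmooth t
  have hρc : ContinuousOn (fun s => ρ t s) (Set.Ici 0) := aux_cont_slice ρ hρsmooth t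
  have hwm : ContinuousOn (fun s => 4 * π * s ^ 2 * μ t s) (Set.Ici 0) :=
    (continuousOn_const.mul ((continuous_pow 2).continuousOn)).mul hmc
  have hm' : ∀ r, 0 < r → HasDerivAt (fun u => M t u) (4 * π * r ^ 2 * μ t r) r := by
    intro r hr
    have : (fun u => M t u) = fun u => ∫ s in (0:ℝ)..u, 4 * π * s ^ 2 * μ t s :=
      funext (hMdef t)
    rw [this]; exact aux_ftc _ hwm r hr
  have hMcont : ContinuousOn (fun u => M t u) (Set.Ioi 0) := fun r hr =>
    ((hm' r hr).continuousAt.continuousWithinAt)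
  have hΦpos : ∀ r, 0 < r → 0 < 1 - 2 * M t r / r := by
    intro r hr
    rw [sub_pos, div_lt_one hr]; exact h2M t r hr
  have hΦcont : ContinuousOn (fun u => 1 - 2 * M t u / u) (Set.Ioi 0) :=
    continuousOn_const.sub ((continuousOn_const.mul hMcont).div continuousOn_id
      (fun x hx => ne_of_gt hx))
  -- the integrating factor
  set c : ℝ → ℝ := fun s => 4 * π * s * (μ t s + P t s) * (1 - 2 * M t s / s)⁻¹ with hcdef
  have hccont : ContinuousOn c (Set.Ioi 0) := by
    refine (((continuousOn_const.mul continuousOn_id).mul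
      ((hmc.mono Ioi_subset_Ici_self).add (hPc.mono Ioi_subset_Ici_self))).mul
      (hΦcont.inv₀ (fun x hx => (hΦpos x hx).ne')))
  set W : ℝ → ℝ := fun u => ∫ s in (1:ℝ)..u, c s with hWdef
  have hW' : ∀ r, 0 < r → HasDerivAt W (c r) r := fun r hr => aux_ftc1 c hccont r hr
  set N : ℝ → ℝ := fun u =>
    4 * π * u ^ 2 * Real.exp (V t u) * ρ t u * Real.sqrt (1 - 2 * M t u / u) with hNdef
  set F : ℝ → ℝ := fun u => g u - N u with hFdef
  set H : ℝ → ℝ := fun u => F u * Real.exp (W u) with hHdef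
  have hρsm' : ContDiffOn ℝ (⊤ : ℕ∞) (Function.uncurry ρ) (Set.univ ×ˢ Set.Ioi 0) :=
    hρsmooth.mono (Set.prod_mono (subset_refl _) Ioi_subset_Ici_self)
  -- H has zero derivative
  have hH0 : ∀ r, 0 < r → HasDerivAt H 0 r := by
    intro r hr
    have hΦp := hΦpos r hr
    have hqpos : 0 < Real.sqrt (1 - 2 * M t r / r) := Real.sqrt_pos.mpr hΦp
    have hv : HasDerivAt (fun r' => V t r') (deriv (fun r' => V t r') r) r :=
      aux_hasDerivAt_r V hVsmooth t r hr
    have hp : HasDerivAt (fun r' => ρ t r') (deriv (fun r' => ρ t r') r) r :=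
      aux_hasDerivAt_r ρ hρsm' t r hr
    have hm := hm' r hr
    have hΦ' : HasDerivAt (fun r' => 1 - 2 * M t r' / r')
        (-((2 * (4 * π * r ^ 2 * μ t r) * r - 2 * M t r * 1) / r ^ 2)) r :=
      ((hm.const_mul 2).div (hasDerivAt_id r) hr.ne').const_sub 1
    have hq : HasDerivAt (fun r' => Real.sqrt (1 - 2 * M t r' / r'))
        ((-((2 * (4 * π * r ^ 2 * μ t r) * r - 2 * M t r * 1) / r ^ 2)) /
          (2 * Real.sqrt (1 - 2 * M t r / r))) r := hΦ'.sqrt hΦp.ne'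
    have he : HasDerivAt (fun r' => Real.exp (V t r'))
        (Real.exp (V t r) * deriv (fun r' => V t r') r) r := hv.exp
    have hf1 : HasDerivAt (fun u : ℝ => 4 * π * u ^ 2) (4 * π * (2 * r)) r := by
      have h := hasDerivAt_pow 2 r
      norm_num at h
      exact h.const_mul (4 * π)
    have hN' := ((hf1.mul he).mul hp).mul hq
    have hF' := (hg' r hr).sub hN'
    have hHd := hF'.mul ((hW' r hr).exp)
    have hμt_eq : deriv (fun t' => μ t' r) t = μT r :=
      (aux_hasDerivAt_t μ hμsmooth t r hr.le).deriv
    have hMt_eq : deriv (fun t' => M t' r) t = g r := (hMt r hr).deriv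
    have hE1 := hcons t r hr
    rw [hMt_eq, hμt_eq, hVr t r hr] at hE1
    have hHfun : H = fun y =>
        (g y - (fun u => 4 * π * u ^ 2 * Real.exp (V t u) * ρ t u *
          Real.sqrt (1 - 2 * M t u / u)) y) * Real.exp (W y) := by
      funext y; simp only [hHdef, hFdef, hNdef]
    rw [hHfun]
    refine hHd.congr_deriv ?_
    simp only [Pi.mul_apply, Pi.sub_apply, hcdef]
    rw [hE1, hVr t r hr]
    generalize hqg : Real.sqrt (1 - 2 * M t r / r) = q
    have hq2 : q ^ 2 = 1 - 2 * M t r / r := by rw [← hqg]; exact Real.sq_sqrt hΦp.le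
    have hqpos' : 0 < q := hqg ▸ hqpos
    rw [← hq2]
    field_simp
    ring
  -- H is constant on (0,∞)
  have hconst : ∀ x ∈ Set.Ioi (0:ℝ), ∀ y ∈ Set.Ioi (0:ℝ), H x = H y := by
    intro x hx y hy
    refine (convex_Ioi (0:ℝ)).is_const_of_fderivWithin_eq_zero
      (fun z hz => (hH0 z hz).differentiableAt.differentiableWithinAt) ?_ hx hy
    intro z hz
    rw [fderivWithin_of_isOpen isOpen_Ioi hz, (hH0 z hz).hasFDerivAt.fderiv]
    ext
    simp
  -- bounds near r = 0
  obtain ⟨Cμ, hCμ⟩ := (isCompact_Icc (a := (0:ℝ)) (b := 1)).exists_bound_of_continuousOn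
    (hmc.mono Icc_subset_Ici_self)
  obtain ⟨CP, hCP⟩ := (isCompact_Icc (a := (0:ℝ)) (b := 1)).exists_bound_of_continuousOn
    (hPc.mono Icc_subset_Ici_self)
  obtain ⟨CT, hCT⟩ := (isCompact_Icc (a := (0:ℝ)) (b := 1)).exists_bound_of_continuousOn
    (hμTcont.mono Icc_subset_Ici_self)
  set B1 : ℝ := max Cμ 0 with hB1def
  set BP : ℝ := max CP 0 with hBPdef
  set BT : ℝ := max CT 0 with hBTdef
  have hB1 : 0 ≤ B1 := le_max_right _ _
  have hBP : 0 ≤ BP := le_max_right _ _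
  have hBT : 0 ≤ BT := le_max_right _ _
  have hμb : ∀ s ∈ Set.Icc (0:ℝ) 1, |μ t s| ≤ B1 := fun s hs =>
    le_trans (hCμ s hs) (le_max_left _ _)
  have hPb : ∀ s ∈ Set.Icc (0:ℝ) 1, |P t s| ≤ BP := fun s hs =>
    le_trans (hCP s hs) (le_max_left _ _)
  have hTb : ∀ s ∈ Set.Icc (0:ℝ) 1, |μT s| ≤ BT := fun s hs =>
    le_trans (hCT s hs) (le_max_left _ _)
  have hMsmall : ∀ r ∈ Set.Ioc (0:ℝ) 1, |M t r| ≤ 4 * π * r ^ 2 * B1 * r := by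
    intro r hrm
    rw [hMdef t r]
    have h := intervalIntegral.norm_integral_le_of_norm_le_const
      (C := 4 * π * r ^ 2 * B1) (f := fun s => 4 * π * s ^ 2 * μ t s) (a := 0) (b := r) ?_
    · rw [Real.norm_eq_abs] at h
      calc |∫ s in (0:ℝ)..r, 4 * π * s ^ 2 * μ t s| ≤ 4 * π * r ^ 2 * B1 * |r - 0| := h
        _ = 4 * π * r ^ 2 * B1 * r := by
            rw [sub_zero, abs_of_pos hrm.1]
    · intro x hx
      rw [Set.uIoc_of_le hrm.1.le] at hx
      have hxb : |μ t x| ≤ B1 := hμb x ⟨hx.1.le, le_trans hx.2 hrm.2⟩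
      rw [Real.norm_eq_abs, abs_mul, abs_of_nonneg (by positivity : (0:ℝ) ≤ 4 * π * x ^ 2)]
      have hx2 : x ^ 2 ≤ r ^ 2 := by nlinarith [hx.1, hx.2]
      nlinarith [abs_nonneg (μ t x), pi_pos,
        mul_le_mul hx2 hxb (abs_nonneg _) (by positivity : (0:ℝ) ≤ r ^ 2)]
  -- uniform positive lower bound for Φ on (0,1]
  obtain ⟨δ, hδpos, hδ⟩ : ∃ δ > (0:ℝ), ∀ s ∈ Set.Ioc (0:ℝ) 1, δ ≤ 1 - 2 * M t s / s := by
    set s₀ : ℝ := min 1 (8 * π * B1 + 1)⁻¹ with hs₀def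
    have hs₀pos : 0 < s₀ := lt_min one_pos (by positivity)
    have hs₀le1 : s₀ ≤ 1 := min_le_left _ _
    have hsmallcase : ∀ s ∈ Set.Ioc (0:ℝ) s₀, (8 * π * B1 + 1)⁻¹ ≤ 1 - 2 * M t s / s := by
      intro s hs
      have hsle1 : s ≤ 1 := le_trans hs.2 hs₀le1
      have hM := hMsmall s ⟨hs.1, hsle1⟩
      have habs : |2 * M t s / s| ≤ 8 * π * B1 * s ^ 2 := by
        rw [abs_div, abs_of_pos hs.1, div_le_iff₀ hs.1, abs_mul, abs_of_nonneg (by norm_num : (0:ℝ) ≤ 2)]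
        nlinarith [hM, hs.1]
      have hs2 : 8 * π * B1 * s ^ 2 ≤ 8 * π * B1 * s₀ := by
        have h1 : s ^ 2 ≤ s₀ := by nlinarith [hs.1, hs.2, hs₀le1, hsle1]
        nlinarith [mul_le_mul_of_nonneg_left h1 (by positivity : (0:ℝ) ≤ 8 * π * B1)]
      have hs₀b : 8 * π * B1 * s₀ ≤ 8 * π * B1 * (8 * π * B1 + 1)⁻¹ := by
        have h2 : s₀ ≤ (8 * π * B1 + 1)⁻¹ := min_le_right 1 (8 * π * B1 + 1)⁻¹
        nlinarith [mul_le_mul_of_nonneg_left h2 (by positivity : (0:ℝ) ≤ 8 * π * B1)]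
      have hne : (8 * π * B1 + 1) ≠ 0 := by positivity
      have hfrac : 8 * π * B1 * (8 * π * B1 + 1)⁻¹ = 1 - (8 * π * B1 + 1)⁻¹ := by
        field_simp
        ring
      have := abs_le.mp habs
      nlinarith [this.1, this.2]
    by_cases hcase : s₀ = 1
    · refine ⟨(8 * π * B1 + 1)⁻¹, by positivity, ?_⟩
      intro s hs
      exact hsmallcase s (by rw [hcase]; exact hs)
    · obtain ⟨z, hz, hzmin⟩ := (isCompact_Icc (a := s₀) (b := 1)).exists_isMinOn
        (Set.nonempty_Icc.mpr hs₀le1)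
        (hΦcont.mono (fun x hx => lt_of_lt_of_le hs₀pos hx.1))
      refine ⟨min ((8 * π * B1 + 1)⁻¹) (1 - 2 * M t z / z),
        lt_min (by positivity) (hΦpos z (lt_of_lt_of_le hs₀pos hz.1)), ?_⟩
      intro s hs
      rcases le_or_gt s s₀ with hsc | hsc
      · exact le_trans (min_le_left _ _) (hsmallcase s ⟨hs.1, hsc⟩)
      · exact le_trans (min_le_right _ _) (hzmin ⟨hsc.le, hs.2⟩)
  -- bound on the integrating factor exponent
  set Cc : ℝ := 4 * π * (B1 + BP) * δ⁻¹ with hCcdef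
  have hCcnn : 0 ≤ Cc := by positivity
  have hcb : ∀ s ∈ Set.Ioc (0:ℝ) 1, |c s| ≤ Cc := by
    intro s hs
    have hΦs := hΦpos s hs.1
    have hδs := hδ s hs
    rw [hcdef]
    simp only
    rw [abs_mul, abs_mul, abs_of_nonneg (by nlinarith [pi_pos, hs.1] : (0:ℝ) ≤ 4 * π * s),
      abs_of_nonneg (le_of_lt (inv_pos.mpr hΦs))]
    have habs : |μ t s + P t s| ≤ B1 + BP :=
      le_trans (abs_add_le _ _) (add_le_add (hμb s ⟨hs.1.le, hs.2⟩) (hPb s ⟨hs.1.le, hs.2⟩))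
    have hinv : (1 - 2 * M t s / s)⁻¹ ≤ δ⁻¹ := by
      apply inv_anti₀ hδpos hδs
    have h4s : 4 * π * s ≤ 4 * π := by nlinarith [pi_pos, hs.2]
    have h1 : 4 * π * s * |μ t s + P t s| ≤ 4 * π * (B1 + BP) := by
      nlinarith [abs_nonneg (μ t s + P t s), pi_pos, hs.1]
    rw [hCcdef]
    have hinvpos : (0:ℝ) < (1 - 2 * M t s / s)⁻¹ := inv_pos.mpr hΦs
    nlinarith [mul_le_mul h1 hinv hinvpos.le (by positivity : (0:ℝ) ≤ 4 * π * (B1 + BP))]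
  have hWb : ∀ r ∈ Set.Ioc (0:ℝ) 1, |W r| ≤ Cc := by
    intro r hrm
    rw [hWdef]
    simp only
    have h := intervalIntegral.norm_integral_le_of_norm_le_const
      (C := Cc) (f := c) (a := 1) (b := r) ?_
    · rw [Real.norm_eq_abs] at h
      refine le_trans h ?_
      have : |r - 1| ≤ 1 := by rw [abs_le]; constructor <;> nlinarith [hrm.1, hrm.2]
      nlinarith [hCcnn]
    · intro x hx
      rw [Real.norm_eq_abs]
      refine hcb x ⟨?_, ?_⟩
      · have := hx.1
        calc (0:ℝ) < min 1 r := lt_min one_pos hrm.1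
          _ < x := this
      · exact le_trans hx.2 (max_le le_rfl hrm.2)
  -- limits as r → 0⁺
  have hmemIoc : Set.Ioc (0:ℝ) 1 ∈ nhdsWithin (0:ℝ) (Set.Ioi 0) :=
    mem_of_superset (Ioo_mem_nhdsGT_of_mem ⟨le_refl (0:ℝ), zero_lt_one⟩)
      (fun x hx => ⟨hx.1, hx.2.le⟩)
  have hglim : Filter.Tendsto g (nhdsWithin 0 (Set.Ioi 0)) (nhds 0) := by
    apply squeeze_zero_norm' (a := fun r => 4 * π * r ^ 2 * BT * r)
    · filter_upwards [hmemIoc] with r hrm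
      rw [hgdef]
      simp only
      have h := intervalIntegral.norm_integral_le_of_norm_le_const
        (C := 4 * π * r ^ 2 * BT) (f := fun s => 4 * π * s ^ 2 * μT s) (a := 0) (b := r) ?_
      · rw [Real.norm_eq_abs] at h ⊢
        calc |∫ s in (0:ℝ)..r, 4 * π * s ^ 2 * μT s| ≤ 4 * π * r ^ 2 * BT * |r - 0| := h
          _ = 4 * π * r ^ 2 * BT * r := by rw [sub_zero, abs_of_pos hrm.1]
      · intro x hx
        rw [Set.uIoc_of_le hrm.1.le] at hx
        have hxb : |μT x| ≤ BT := hTb x ⟨hx.1.le, le_trans hx.2 hrm.2⟩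
        rw [Real.norm_eq_abs, abs_mul, abs_of_nonneg (by positivity : (0:ℝ) ≤ 4 * π * x ^ 2)]
        have hx2 : x ^ 2 ≤ r ^ 2 := by nlinarith [hx.1, hx.2]
        nlinarith [abs_nonneg (μT x), pi_pos,
          mul_le_mul hx2 hxb (abs_nonneg _) (by positivity : (0:ℝ) ≤ r ^ 2)]
    · have hco : Continuous (fun r : ℝ => 4 * π * r ^ 2 * BT * r) := by continuity
      have := (hco.tendsto 0).mono_left (nhdsWithin_le_nhds (s := Set.Ioi 0))
      simpa using this
  have hMdivlim : Filter.Tendsto (fun r => 2 * M t r / r) (nhdsWithin 0 (Set.Ioi 0)) (nhds 0) := by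
    apply squeeze_zero_norm' (a := fun r => 8 * π * B1 * r ^ 2)
    · filter_upwards [hmemIoc] with r hrm
      have hM := hMsmall r hrm
      rw [Real.norm_eq_abs, abs_div, abs_of_pos hrm.1, div_le_iff₀ hrm.1, abs_mul,
        abs_of_nonneg (by norm_num : (0:ℝ) ≤ 2)]
      nlinarith [hM, hrm.1]
    · have hco : Continuous (fun r : ℝ => 8 * π * B1 * r ^ 2) := by continuity
      have := (hco.tendsto 0).mono_left (nhdsWithin_le_nhds (s := Set.Ioi 0))
      simpa using this
  have hΦlim : Filter.Tendsto (fun r => 1 - 2 * M t r / r) (nhdsWithin 0 (Set.Ioi 0)) (nhds 1) := by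
    have := (tendsto_const_nhds (x := (1:ℝ)) (f := nhdsWithin (0:ℝ) (Set.Ioi 0))).sub hMdivlim
    simpa using this
  have hsqlim : Filter.Tendsto (fun r => Real.sqrt (1 - 2 * M t r / r))
      (nhdsWithin 0 (Set.Ioi 0)) (nhds 1) := by
    have := (Real.continuous_sqrt.continuousAt.tendsto (x := (1:ℝ))).comp hΦlim
    simpa [Function.comp_def] using this
  have hexplim : Filter.Tendsto (fun r => Real.exp (V t r)) (nhdsWithin 0 (Set.Ioi 0))
      (nhds (Real.exp (V₀ t))) := Real.continuous_exp.continuousAt.tendsto.comp (hV₀ t)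
  have hρlim : Filter.Tendsto (fun r => ρ t r) (nhdsWithin 0 (Set.Ioi 0)) (nhds (ρ t 0)) := by
    have h := (hρc 0 (Set.self_mem_Ici)).tendsto
    exact h.mono_left (nhdsWithin_mono 0 Ioi_subset_Ici_self)
  have hr2lim : Filter.Tendsto (fun r : ℝ => 4 * π * r ^ 2) (nhdsWithin 0 (Set.Ioi 0)) (nhds 0) := by
    have hco : Continuous (fun r : ℝ => 4 * π * r ^ 2) := by continuity
    have := (hco.tendsto 0).mono_left (nhdsWithin_le_nhds (s := Set.Ioi 0))
    simpa using this
  have hNlim : Filter.Tendsto N (nhdsWithin 0 (Set.Ioi 0)) (nhds 0) := by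
    rw [hNdef]
    have := ((hr2lim.mul hexplim).mul hρlim).mul hsqlim
    simpa using this
  have hFlim : Filter.Tendsto F (nhdsWithin 0 (Set.Ioi 0)) (nhds 0) := by
    rw [hFdef]
    have := hglim.sub hNlim
    simpa using this
  have hHlim : Filter.Tendsto H (nhdsWithin 0 (Set.Ioi 0)) (nhds 0) := by
    apply squeeze_zero_norm' (a := fun r => Real.exp Cc * ‖F r‖)
    · filter_upwards [hmemIoc] with r hrm
      rw [hHdef]
      simp only
      rw [norm_mul]
      have h1 : ‖Real.exp (W r)‖ ≤ Real.exp Cc := by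
        rw [Real.norm_eq_abs, abs_of_pos (Real.exp_pos _)]
        exact Real.exp_le_exp.mpr (le_trans (le_abs_self _) (hWb r hrm))
      calc ‖F r‖ * ‖Real.exp (W r)‖ ≤ ‖F r‖ * Real.exp Cc :=
            mul_le_mul_of_nonneg_left h1 (norm_nonneg _)
        _ = Real.exp Cc * ‖F r‖ := by ring
    · have := hFlim.norm.const_mul (Real.exp Cc)
      simpa using this
  -- conclude that H vanishes identically
  have hH1 : H 1 = 0 := by
    have h2 : Filter.Tendsto H (nhdsWithin 0 (Set.Ioi 0)) (nhds (H 1)) := by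
      refine Filter.Tendsto.congr' ?_ (tendsto_const_nhds (x := H 1))
      filter_upwards [self_mem_nhdsWithin] with x hx
      exact hconst 1 (Set.mem_Ioi.mpr one_pos) x hx
    exact tendsto_nhds_unique h2 hHlim
  have hHzero : ∀ r, 0 < r → H r = 0 := fun r hr =>
    (hconst r (Set.mem_Ioi.mpr hr) 1 (Set.mem_Ioi.mpr one_pos)).trans hH1
  -- finish
  intro r hr
  have hx := hHzero r hr
  rw [hHdef] at hx
  simp only at hx
  have hF0 : F r = 0 := by
    rcases mul_eq_zero.mp hx with h | h
    · exact h
    · exact absurd h (Real.exp_ne_zero _)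
  rw [hFdef] at hF0
  simp only at hF0
  have h1 : g r = N r := sub_eq_zero.mp hF0
  calc deriv (fun t' => M t' r) t = g r := (hMt r hr).deriv
    _ = N r := h1
    _ = 4 * π * r ^ 2 * Real.exp (V t r) * ρ t r * Real.sqrt (1 - 2 * M t r / r) := by
        rw [hNdef]
end

section
/- Let Ω ⊆ ℝ × (0,∞), let M, V, μ, ρ, P, Q : Ω → ℝ be smooth with 2M(t,r) < r on Ω, and write Φ = 1 − 2M/r. Suppose that on Ω: M_r = 4πr²μ, V_r = Φ^{−1}(M/r² + 4πrP), M_t = 4πr² e^V ρ √Φ, and the conservation law ρ_t = e^V √Φ (V_r(μ + P) + P_r + 2(P − Q)/r) − (2ρ M_t/r) Φ^{−1} holds. Then the angular component of the Einstein equation holds automatically: 8πQ = (V_rr + V_r² + V_r/r)Φ + (M/r − M_r)(1/r² + V_r/r) + (V_t M_t − M_tt)/(r e^{2V}) · Φ^{−1} − 3M_t²/(r² e^{2V}) · Φ^{−2}. -/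
open Real

theorem stmt_14 (Ω : Set (ℝ × ℝ)) (hΩopen : IsOpen Ω)
    (M V μ ρ P Q : ℝ → ℝ → ℝ)
    (hΩ : ∀ x ∈ Ω, (0:ℝ) < x.2)
    (hMsmooth : ContDiffOn ℝ (⊤ : ℕ∞) (Function.uncurry M) Ω)
    (hVsmooth : ContDiffOn ℝ (⊤ : ℕ∞) (Function.uncurry V) Ω)
    (hμsmooth : ContDiffOn ℝ (⊤ : ℕ∞) (Function.uncurry μ) Ω)
    (hρsmooth : ContDiffOn ℝ (⊤ : ℕ∞) (Function.uncurry ρ) Ω)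
    (hPsmooth : ContDiffOn ℝ (⊤ : ℕ∞) (Function.uncurry P) Ω)
    (hQsmooth : ContDiffOn ℝ (⊤ : ℕ∞) (Function.uncurry Q) Ω)
    (h2M : ∀ x ∈ Ω, 2 * M x.1 x.2 < x.2)
    (hMr : ∀ t r, (t, r) ∈ Ω →
      deriv (fun r' => M t r') r = 4 * π * r ^ 2 * μ t r)
    (hVr : ∀ t r, (t, r) ∈ Ω →
      deriv (fun r' => V t r') r =
        (1 - 2 * M t r / r)⁻¹ * (M t r / r ^ 2 + 4 * π * r * P t r))
    (hMt : ∀ t r, (t, r) ∈ Ω →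
      deriv (fun t' => M t' r) t =
        4 * π * r ^ 2 * Real.exp (V t r) * ρ t r * Real.sqrt (1 - 2 * M t r / r))
    (hcons : ∀ t r, (t, r) ∈ Ω →
      deriv (fun t' => ρ t' r) t =
        Real.exp (V t r) * Real.sqrt (1 - 2 * M t r / r) *
            (deriv (fun r' => V t r') r * (μ t r + P t r) +
              deriv (fun r' => P t r') r + 2 * (P t r - Q t r) / r) -
          2 * ρ t r * deriv (fun t' => M t' r) t / r * (1 - 2 * M t r / r)⁻¹) :
    ∀ t r, (t, r) ∈ Ω →
      8 * π * Q t r =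
        (deriv (fun r' => deriv (fun s => V t s) r') r +
            (deriv (fun r' => V t r') r) ^ 2 + deriv (fun r' => V t r') r / r) *
            (1 - 2 * M t r / r) +
          (M t r / r - deriv (fun r' => M t r') r) *
            (1 / r ^ 2 + deriv (fun r' => V t r') r / r) +
          (deriv (fun t' => V t' r) t * deriv (fun t' => M t' r) t -
              deriv (fun t' => deriv (fun s => M s r) t') t) /
              (r * Real.exp (2 * V t r)) * (1 - 2 * M t r / r)⁻¹ -
          3 * (deriv (fun t' => M t' r) t) ^ 2 / (r ^ 2 * Real.exp (2 * V t r)) *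
            ((1 - 2 * M t r / r)⁻¹) ^ 2 := by
  intro t r htr
  have hr : 0 < r := hΩ _ htr
  have hr0 : r ≠ 0 := hr.ne'
  have hΦ : 0 < 1 - 2 * M t r / r := by
    have h := h2M _ htr
    have h2 : 2 * M t r / r < 1 := (div_lt_one hr).mpr h
    linarith
  have hΦ0 : (1 - 2 * M t r / r) ≠ 0 := hΦ.ne'
  have sliceR : ∀ (F : ℝ → ℝ → ℝ), ContDiffOn ℝ (⊤ : ℕ∞) (Function.uncurry F) Ω →
      ∀ a b, (a, b) ∈ Ω → DifferentiableAt ℝ (fun r' => F a r') b := by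
    intro F hF a b h
    have h1 : DifferentiableAt ℝ (Function.uncurry F) (a, b) :=
      (hF.differentiableOn (by simp)).differentiableAt (hΩopen.mem_nhds h)
    exact h1.comp b ((differentiableAt_const a).prodMk differentiableAt_id)
  have sliceT : ∀ (F : ℝ → ℝ → ℝ), ContDiffOn ℝ (⊤ : ℕ∞) (Function.uncurry F) Ω →
      ∀ a b, (a, b) ∈ Ω → DifferentiableAt ℝ (fun t' => F t' b) a := by
    intro F hF a b h
    have h1 : DifferentiableAt ℝ (Function.uncurry F) (a, b) :=
      (hF.differentiableOn (by simp)).differentiableAt (hΩopen.mem_nhds h)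
    exact h1.comp a ((differentiableAt_id : DifferentiableAt ℝ id a).prodMk (differentiableAt_const b))
  -- derivative facts at (t, r)
  have hMdr : HasDerivAt (fun r' => M t r') (4 * π * r ^ 2 * μ t r) r := by
    have h := (sliceR M hMsmooth t r htr).hasDerivAt
    rwa [hMr t r htr] at h
  have hPdr : HasDerivAt (fun r' => P t r') (deriv (fun r' => P t r') r) r :=
    (sliceR P hPsmooth t r htr).hasDerivAt
  have hMdt : HasDerivAt (fun t' => M t' r)
      (4 * π * r ^ 2 * Real.exp (V t r) * ρ t r * Real.sqrt (1 - 2 * M t r / r)) t := by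
    have h := (sliceT M hMsmooth t r htr).hasDerivAt
    rwa [hMt t r htr] at h
  have hVdt : HasDerivAt (fun t' => V t' r) (deriv (fun t' => V t' r) t) t :=
    (sliceT V hVsmooth t r htr).hasDerivAt
  have hρdt : HasDerivAt (fun t' => ρ t' r) (deriv (fun t' => ρ t' r) t) t :=
    (sliceT ρ hρsmooth t r htr).hasDerivAt
  -- second r-derivative of V
  have hΦdr : HasDerivAt (fun r' => 1 - 2 * M t r' / r')
      (-((2 * (4 * π * r ^ 2 * μ t r) * r - 2 * M t r * 1) / r ^ 2)) r := by
    have h := ((hMdr.const_mul 2).div (hasDerivAt_id r) hr0).const_sub 1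
    convert h using 1 <;> rfl
  have hinv : HasDerivAt (fun r' => (1 - 2 * M t r' / r')⁻¹)
      (-(-((2 * (4 * π * r ^ 2 * μ t r) * r - 2 * M t r * 1) / r ^ 2)) /
        (1 - 2 * M t r / r) ^ 2) r := by
    have h := hΦdr.inv hΦ0
    convert h using 2 <;> rfl
  have hN : HasDerivAt (fun r' => M t r' / r' ^ 2 + 4 * π * r' * P t r')
      ((4 * π * r ^ 2 * μ t r * r ^ 2 - M t r * (2 * r ^ 1)) / (r ^ 2) ^ 2 +
        (4 * π * 1 * P t r + 4 * π * r * deriv (fun r' => P t r') r)) r := by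
    exact (hMdr.div (hasDerivAt_pow 2 r) (pow_ne_zero 2 hr0)).add
      (((hasDerivAt_id r).const_mul (4 * π)).mul hPdr)
  have hg := hinv.mul hN
  have hSopenR : IsOpen {r' : ℝ | (t, r') ∈ Ω} :=
    hΩopen.preimage (by fun_prop)
  have hevR : (fun r' => deriv (fun s => V t s) r') =ᶠ[nhds r]
      (fun r' => (1 - 2 * M t r' / r')⁻¹ * (M t r' / r' ^ 2 + 4 * π * r' * P t r')) := by
    filter_upwards [hSopenR.mem_nhds htr] with r' hr' using hVr t r' hr'
  have E5 := hevR.deriv_eq.trans hg.deriv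
  -- second t-derivative of M
  have hsqt : HasDerivAt (fun t' => Real.sqrt (1 - 2 * M t' r / r))
      (-(2 * (4 * π * r ^ 2 * Real.exp (V t r) * ρ t r * Real.sqrt (1 - 2 * M t r / r)) / r) /
        (2 * Real.sqrt (1 - 2 * M t r / r))) t := by
    have h1 : HasDerivAt (fun t' => 1 - 2 * M t' r / r)
        (-(2 * (4 * π * r ^ 2 * Real.exp (V t r) * ρ t r * Real.sqrt (1 - 2 * M t r / r)) / r)) t :=
      ((hMdt.const_mul 2).div_const r).const_sub 1
    exact h1.sqrt hΦ0
  have hDt : HasDerivAt (fun t' =>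
      4 * π * r ^ 2 * Real.exp (V t' r) * ρ t' r * Real.sqrt (1 - 2 * M t' r / r))
      (((4 * π * r ^ 2 * (Real.exp (V t r) * deriv (fun t' => V t' r) t)) * ρ t r +
          4 * π * r ^ 2 * Real.exp (V t r) * deriv (fun t' => ρ t' r) t) *
          Real.sqrt (1 - 2 * M t r / r) +
        4 * π * r ^ 2 * Real.exp (V t r) * ρ t r *
          (-(2 * (4 * π * r ^ 2 * Real.exp (V t r) * ρ t r * Real.sqrt (1 - 2 * M t r / r)) / r) /
            (2 * Real.sqrt (1 - 2 * M t r / r)))) t := by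
    exact (((hVdt.exp.const_mul (4 * π * r ^ 2)).mul hρdt).mul hsqt)
  have hSopenT : IsOpen {t' : ℝ | (t', r) ∈ Ω} :=
    hΩopen.preimage (by fun_prop)
  have hevT : (fun t' => deriv (fun s => M s r) t') =ᶠ[nhds t]
      (fun t' => 4 * π * r ^ 2 * Real.exp (V t' r) * ρ t' r * Real.sqrt (1 - 2 * M t' r / r)) := by
    filter_upwards [hSopenT.mem_nhds htr] with t' ht' using hMt t' r ht'
  have E6 := hevT.deriv_eq.trans hDt.deriv
  -- rewrite everything
  rw [E5, E6, hcons t r htr, hMr t r htr, hVr t r htr, hMt t r htr]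
  have he2 : Real.exp (2 * V t r) = Real.exp (V t r) ^ 2 := by
    rw [two_mul, Real.exp_add, sq]
  rw [he2]
  have he0 : Real.exp (V t r) ≠ 0 := (Real.exp_pos _).ne'
  set s := Real.sqrt (1 - 2 * M t r / r) with hsdef
  have hs2 : s ^ 2 = 1 - 2 * M t r / r := Real.sq_sqrt hΦ.le
  have hs0 : s ≠ 0 := by
    rw [hsdef]
    exact (Real.sqrt_pos.mpr hΦ).ne'
  rw [← hs2]
  field_simp
  ring
end

section
/- Let M, V : ℝ × [0,∞) → ℝ and f, p : ℝ × [0,∞) → ℂ be smooth with M(t,0) = 0 for all t and 2M(t,r) < r for all r > 0; write Φ = 1 − 2M/r. Suppose that for r > 0 they satisfy the spherically symmetric Einstein–Klein–Gordon system: M_r = 4πr²μ₀(|f|² + Φ(|f_r|² + |p|²)/Υ²); V_r = Φ^{−1}(M/r² − 4πrμ₀(|f|² − Φ(|f_r|² + |p|²)/Υ²)); f_t = p e^V √Φ; and p_t = e^V(−Υ² f Φ^{−1/2} + (2f_r/r)√Φ) + ∂_r(e^V f_r √Φ). Then the first constraint-evolution equation also holds for all r > 0: M_t = (8πr²μ₀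 e^V/Υ²) Φ^{3/2} Re(f_r · conj(p)). -/
open Real

noncomputable section

namespace EKG

open Set Filter Topology

variable {F : Type*} [NormedAddCommGroup F] [NormedSpace ℝ F]

lemma hasDerivAt_fst (u : ℝ → ℝ → F) {t r : ℝ}
    (h : DifferentiableAt ℝ (Function.uncurry u) (t, r)) :
    HasDerivAt (fun t' => u t' r) (fderiv ℝ (Function.uncurry u) (t, r) (1, 0)) t := by
  have hc : HasDerivAt (fun t' : ℝ => ((t' : ℝ), r)) (((1:ℝ), (0:ℝ))) t := by
    simpa using ((hasDerivAt_id t).prodMk (hasDerivAt_const t r))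
  simpa [Function.uncurry, Function.comp_def] using
    (h.hasFDerivAt.comp_hasDerivAt t hc)

lemma hasDerivAt_snd (u : ℝ → ℝ → F) {t r : ℝ}
    (h : DifferentiableAt ℝ (Function.uncurry u) (t, r)) :
    HasDerivAt (fun r' => u t r') (fderiv ℝ (Function.uncurry u) (t, r) (0, 1)) r := by
  have hc : HasDerivAt (fun r' : ℝ => ((t : ℝ), r')) (((0:ℝ), (1:ℝ))) r := by
    simpa using ((hasDerivAt_const r t).prodMk (hasDerivAt_id r))
  simpa [Function.uncurry, Function.comp_def] using
    (h.hasFDerivAt.comp_hasDerivAt r hc)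

lemma hasDerivAt_fst' (u : ℝ → ℝ → F) {t r : ℝ}
    (h : DifferentiableAt ℝ (Function.uncurry u) (t, r)) :
    HasDerivAt (fun t' => u t' r) (deriv (fun t' => u t' r) t) t := by
  have h1 := hasDerivAt_fst u h
  rwa [h1.deriv]

lemma hasDerivAt_snd' (u : ℝ → ℝ → F) {t r : ℝ}
    (h : DifferentiableAt ℝ (Function.uncurry u) (t, r)) :
    HasDerivAt (fun r' => u t r') (deriv (fun r' => u t r') r) r := by
  have h1 := hasDerivAt_snd u h
  rwa [h1.deriv]


lemma hasDerivAt_congr_deriv {f : ℝ → F} {a b : F} {x : ℝ}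
    (h : HasDerivAt f a x) (e : a = b) : HasDerivAt f b x := e ▸ h

lemma mixed_core (u : ℝ → ℝ → F) {t r : ℝ}
    (h : ContDiffAt ℝ (⊤ : ℕ∞) (Function.uncurry u) (t, r)) :
    ∃ b : F,
      HasDerivAt (fun r' => deriv (fun t' => u t' r') t) b r ∧
      HasDerivAt (fun t' => deriv (fun r' => u t' r') r) b t := by
  set U := Function.uncurry u with hU
  have h2 : ContDiffAt ℝ 2 U (t, r) := h.of_le (WithTop.coe_le_coe.2 le_top)
  have hg : ContDiffAt ℝ 1 (fderiv ℝ U) (t, r) := h2.fderiv_right (by norm_num)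
  have hBdiff : DifferentiableAt ℝ (fderiv ℝ U) (t, r) := hg.differentiableAt one_ne_zero
  set B := fderiv ℝ (fderiv ℝ U) (t, r) with hB
  have hev : ∀ᶠ y in 𝓝 (t, r), HasFDerivAt U (fderiv ℝ U y) y := by
    filter_upwards [h2.eventually (by simp)] with y hy
    exact (hy.differentiableAt two_ne_zero).hasFDerivAt
  have hsymm := second_derivative_symmetric_of_eventually hev hBdiff.hasFDerivAt
  have hc2 : HasDerivAt (fun r' : ℝ => ((t : ℝ), r')) (((0:ℝ), (1:ℝ))) r := by
    simpa using ((hasDerivAt_const r t).prodMk (hasDerivAt_id r))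
  have hgd2 : HasDerivAt (fun r' => fderiv ℝ U (t, r')) (B ((0:ℝ), (1:ℝ))) r :=
    hBdiff.hasFDerivAt.comp_hasDerivAt r hc2
  have hA2 : HasDerivAt (fun r' => fderiv ℝ U (t, r') (((1:ℝ), (0:ℝ)))) ((B (0, 1)) (1, 0)) r := by
    simpa using hgd2.clm_apply (hasDerivAt_const r (((1:ℝ), (0:ℝ))))
  have hee2 : (fun r' => deriv (fun t' => u t' r') t)
      =ᶠ[𝓝 r] fun r' => fderiv ℝ U (t, r') ((1:ℝ), (0:ℝ)) := by
    have htend : Tendsto (fun r' : ℝ => ((t:ℝ), r')) (𝓝 r) (𝓝 (t, r)) :=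
      (Continuous.prodMk_right t).tendsto r
    filter_upwards [htend.eventually hev] with r' hr'
    exact (hasDerivAt_fst u hr'.differentiableAt).deriv
  have hfirst : HasDerivAt (fun r' => deriv (fun t' => u t' r') t) ((B (0, 1)) (1, 0)) r :=
    hA2.congr_of_eventuallyEq hee2
  have hc1 : HasDerivAt (fun t' : ℝ => ((t' : ℝ), r)) (((1:ℝ), (0:ℝ))) t := by
    simpa using ((hasDerivAt_id t).prodMk (hasDerivAt_const t r))
  have hgd1 : HasDerivAt (fun t' => fderiv ℝ U (t', r)) (B ((1:ℝ), (0:ℝ))) t :=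
    hBdiff.hasFDerivAt.comp_hasDerivAt t hc1
  have hA1 : HasDerivAt (fun t' => fderiv ℝ U (t', r) (((0:ℝ), (1:ℝ)))) ((B (1, 0)) (0, 1)) t := by
    simpa using hgd1.clm_apply (hasDerivAt_const t (((0:ℝ), (1:ℝ))))
  have hee1 : (fun t' => deriv (fun r' => u t' r') r)
      =ᶠ[𝓝 t] fun t' => fderiv ℝ U (t', r) ((0:ℝ), (1:ℝ)) := by
    have htend : Tendsto (fun t' : ℝ => ((t':ℝ), r)) (𝓝 t) (𝓝 (t, r)) :=
      (continuous_id.prodMk continuous_const).tendsto t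
    filter_upwards [htend.eventually hev] with t' ht'
    exact (hasDerivAt_snd u ht'.differentiableAt).deriv
  have hsecond : HasDerivAt (fun t' => deriv (fun r' => u t' r') r) ((B (1, 0)) (0, 1)) t :=
    hA1.congr_of_eventuallyEq hee1
  exact ⟨_, hfirst, hsymm (0,1) (1,0) ▸ hsecond⟩

lemma mixed (u : ℝ → ℝ → F) {t r : ℝ}
    (h : ContDiffAt ℝ (⊤ : ℕ∞) (Function.uncurry u) (t, r)) :
    HasDerivAt (fun r' => deriv (fun t' => u t' r') t)
      (deriv (fun t' => deriv (fun r' => u t' r') r) t) r := by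
  obtain ⟨b, h1, h2⟩ := mixed_core u h
  rwa [h2.deriv]

lemma mixed' (u : ℝ → ℝ → F) {t r : ℝ}
    (h : ContDiffAt ℝ (⊤ : ℕ∞) (Function.uncurry u) (t, r)) :
    HasDerivAt (fun t' => deriv (fun r' => u t' r') r)
      (deriv (fun r' => deriv (fun t' => u t' r') t) r) t := by
  obtain ⟨b, h1, h2⟩ := mixed_core u h
  rwa [h1.deriv]

/-- The domain. -/
def S : Set (ℝ × ℝ) := Set.univ ×ˢ Set.Ici 0

lemma uniqueDiffOn_S : UniqueDiffOn ℝ S :=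
  uniqueDiffOn_univ.prod (uniqueDiffOn_Ici 0)

lemma mem_S {t r : ℝ} (hr : 0 ≤ r) : (t, r) ∈ S := ⟨mem_univ _, hr⟩

lemma contDiffAt_interior {u : ℝ → ℝ → F}
    (h : ContDiffOn ℝ (⊤ : ℕ∞) (Function.uncurry u) S) {t r : ℝ} (hr : 0 < r) :
    ContDiffAt ℝ (⊤ : ℕ∞) (Function.uncurry u) (t, r) :=
  (h (t, r) (mem_S hr.le)).contDiffAt
    (prod_mem_nhds univ_mem (Ici_mem_nhds hr))

lemma contOn_partial {u : ℝ → ℝ → F}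
    (h : ContDiffOn ℝ (⊤ : ℕ∞) (Function.uncurry u) S) (t : ℝ) (dir : ℝ × ℝ) :
    ContinuousOn
      (fun r' => fderivWithin ℝ (Function.uncurry u) S (t, r') dir) (Ici 0) := by
  have h1 : ContinuousOn (fderivWithin ℝ (Function.uncurry u) S) S :=
    h.continuousOn_fderivWithin uniqueDiffOn_S (by simp)
  have h2 : ContinuousOn (fun r' : ℝ => ((t:ℝ), r')) (Ici 0) :=
    Continuous.continuousOn (by continuity)
  have h3 : MapsTo (fun r' : ℝ => ((t:ℝ), r')) (Ici 0) S := fun x hx => mem_S hx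
  have h4 := h1.comp h2 h3
  exact (ContinuousLinearMap.apply ℝ F dir).continuous.comp_continuousOn h4

lemma deriv_fst_eq {u : ℝ → ℝ → F}
    (h : ContDiffOn ℝ (⊤ : ℕ∞) (Function.uncurry u) S) {t r : ℝ} (hr : 0 < r) :
    deriv (fun t' => u t' r) t
      = fderivWithin ℝ (Function.uncurry u) S (t, r) (1, 0) := by
  have hd : DifferentiableAt ℝ (Function.uncurry u) (t, r) :=
    (contDiffAt_interior h hr).differentiableAt (by simp)
  rw [(hasDerivAt_fst u hd).deriv,
    fderivWithin_of_mem_nhds (s := S) (prod_mem_nhds univ_mem (Ici_mem_nhds hr))]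

lemma deriv_snd_eq {u : ℝ → ℝ → F}
    (h : ContDiffOn ℝ (⊤ : ℕ∞) (Function.uncurry u) S) {t r : ℝ} (hr : 0 < r) :
    deriv (fun r' => u t r') r
      = fderivWithin ℝ (Function.uncurry u) S (t, r) (0, 1) := by
  have hd : DifferentiableAt ℝ (Function.uncurry u) (t, r) :=
    (contDiffAt_interior h hr).differentiableAt (by simp)
  rw [(hasDerivAt_snd u hd).deriv,
    fderivWithin_of_mem_nhds (s := S) (prod_mem_nhds univ_mem (Ici_mem_nhds hr))]

lemma tendsto_partial_fst {u : ℝ → ℝ → F}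
    (h : ContDiffOn ℝ (⊤ : ℕ∞) (Function.uncurry u) S) (t : ℝ) :
    Tendsto (fun r' => deriv (fun t' => u t' r') t) (𝓝[>] (0:ℝ))
      (𝓝 (fderivWithin ℝ (Function.uncurry u) S (t, 0) (1, 0))) := by
  have h1 := ((contOn_partial h t (1, 0)) 0 self_mem_Ici).tendsto
  have h2 : Tendsto (fun r' => fderivWithin ℝ (Function.uncurry u) S (t, r') (1, 0))
      (𝓝[>] (0:ℝ)) (𝓝 (fderivWithin ℝ (Function.uncurry u) S (t, 0) (1, 0))) :=
    h1.mono_left (nhdsWithin_mono _ Ioi_subset_Ici_self)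
  refine h2.congr' ?_
  filter_upwards [self_mem_nhdsWithin] with r' hr'
  exact (deriv_fst_eq h hr').symm

lemma tendsto_partial_snd {u : ℝ → ℝ → F}
    (h : ContDiffOn ℝ (⊤ : ℕ∞) (Function.uncurry u) S) (t : ℝ) :
    Tendsto (fun r' => deriv (fun r'' => u t r'') r') (𝓝[>] (0:ℝ))
      (𝓝 (fderivWithin ℝ (Function.uncurry u) S (t, 0) (0, 1))) := by
  have h1 := ((contOn_partial h t (0, 1)) 0 self_mem_Ici).tendsto
  have h2 : Tendsto (fun r' => fderivWithin ℝ (Function.uncurry u) S (t, r') (0, 1))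
      (𝓝[>] (0:ℝ)) (𝓝 (fderivWithin ℝ (Function.uncurry u) S (t, 0) (0, 1))) :=
    h1.mono_left (nhdsWithin_mono _ Ioi_subset_Ici_self)
  refine h2.congr' ?_
  filter_upwards [self_mem_nhdsWithin] with r' hr'
  exact (deriv_snd_eq h hr').symm

lemma hasDerivAt_fst_boundary {u : ℝ → ℝ → F}
    (h : ContDiffOn ℝ (⊤ : ℕ∞) (Function.uncurry u) S) (t : ℝ) :
    HasDerivAt (fun t' => u t' 0)
      (fderivWithin ℝ (Function.uncurry u) S (t, 0) (1, 0)) t := by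
  have hdw : HasFDerivWithinAt (Function.uncurry u)
      (fderivWithin ℝ (Function.uncurry u) S (t, 0)) S (t, 0) :=
    ((h (t, 0) (mem_S le_rfl)).differentiableWithinAt (by simp)).hasFDerivWithinAt
  have hc : HasDerivAt (fun t' : ℝ => ((t' : ℝ), (0:ℝ))) (((1:ℝ), (0:ℝ))) t := by
    simpa using ((hasDerivAt_id t).prodMk (hasDerivAt_const t (0:ℝ)))
  have h3 : MapsTo (fun t' : ℝ => ((t':ℝ), (0:ℝ))) univ S := fun x _ => mem_S le_rfl
  have := hdw.comp_hasDerivWithinAt t (hc.hasDerivWithinAt (s := univ)) h3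
  simpa [hasDerivWithinAt_univ, Function.uncurry, Function.comp_def] using this

lemma tendsto_slope_boundary {u : ℝ → ℝ → F}
    (h : ContDiffOn ℝ (⊤ : ℕ∞) (Function.uncurry u) S) (t : ℝ) (h0 : u t 0 = 0) :
    Tendsto (fun r' => r'⁻¹ • u t r') (𝓝[>] (0:ℝ))
      (𝓝 (fderivWithin ℝ (Function.uncurry u) S (t, 0) (0, 1))) := by
  have hdw : HasFDerivWithinAt (Function.uncurry u)
      (fderivWithin ℝ (Function.uncurry u) S (t, 0)) S (t, 0) :=
    ((h (t, 0) (mem_S le_rfl)).differentiableWithinAt (by simp)).hasFDerivWithinAt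
  have hc : HasDerivWithinAt (fun r' : ℝ => ((t : ℝ), (r':ℝ))) (((0:ℝ), (1:ℝ)))
      (Ici 0) 0 := by
    simpa using ((hasDerivAt_const (0:ℝ) t).prodMk (hasDerivAt_id (0:ℝ))).hasDerivWithinAt
  have h3 : MapsTo (fun r' : ℝ => ((t:ℝ), (r':ℝ))) (Ici 0) S := fun x hx => mem_S hx
  have h4 : HasDerivWithinAt (fun r' => u t r')
      (fderivWithin ℝ (Function.uncurry u) S (t, 0) (0, 1)) (Ici 0) 0 := by
    simpa [Function.uncurry, Function.comp_def] using hdw.comp_hasDerivWithinAt 0 hc h3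
  rw [hasDerivWithinAt_iff_tendsto_slope] at h4
  have hset : (Ici (0:ℝ)) \ {0} = Ioi 0 := by
    ext x; simp [lt_iff_le_and_ne, eq_comm, and_comm]
  rw [hset] at h4
  refine h4.congr ?_
  intro x
  simp [slope_def_module, h0]

lemma tendsto_val {u : ℝ → ℝ → F}
    (h : ContDiffOn ℝ (⊤ : ℕ∞) (Function.uncurry u) S) (t : ℝ) :
    Tendsto (fun x => u t x) (𝓝[>] (0:ℝ)) (𝓝 (u t 0)) := by
  have h2 : ContinuousOn (fun r' : ℝ => ((t:ℝ), r')) (Ici 0) :=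
    Continuous.continuousOn (by continuity)
  have h3 : MapsTo (fun r' : ℝ => ((t:ℝ), r')) (Ici 0) S := fun x hx => mem_S hx
  have h4 := (h.continuousOn.comp h2 h3) 0 self_mem_Ici
  exact h4.tendsto.mono_left (nhdsWithin_mono _ Ioi_subset_Ici_self)

lemma norm_sq_complex (z : ℂ) : ‖z‖^2 = z.re^2 + z.im^2 := by
  rw [← Complex.normSq_eq_norm_sq, Complex.normSq_apply]
  ring

lemma hasDerivAt_re {c : ℝ → ℂ} {c' : ℂ} {x : ℝ} (h : HasDerivAt c c' x) :
    HasDerivAt (fun y => (c y).re) c'.re x :=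
  Complex.reCLM.hasFDerivAt.comp_hasDerivAt x h

lemma hasDerivAt_im {c : ℝ → ℂ} {c' : ℂ} {x : ℝ} (h : HasDerivAt c c' x) :
    HasDerivAt (fun y => (c y).im) c'.im x :=
  Complex.imCLM.hasFDerivAt.comp_hasDerivAt x h

lemma hasDerivAt_norm_sq {c : ℝ → ℂ} {c' : ℂ} {x : ℝ} (h : HasDerivAt c c' x) :
    HasDerivAt (fun y => ‖c y‖^2)
      (2 * (c'.re * (c x).re + c'.im * (c x).im)) x := by
  have h1 := ((hasDerivAt_re h).fun_pow 2).add ((hasDerivAt_im h).fun_pow 2)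
  have h2 : (fun y => ‖c y‖^2) = fun y => (c y).re^2 + (c y).im^2 := by
    funext y; exact norm_sq_complex _
  rw [h2]
  exact h1.congr_deriv (by push_cast; ring)

lemma hasDerivAt_deriv_of_contDiffAt {g : ℝ → F} {x : ℝ}
    (h : ContDiffAt ℝ (⊤ : ℕ∞) g x) :
    HasDerivAt (fun y => deriv g y) (deriv (fun y => deriv g y) x) x := by
  have h1 : ContDiffAt ℝ 1 (fderiv ℝ g) x := h.fderiv_right (WithTop.coe_le_coe.2 le_top)
  have h2 : DifferentiableAt ℝ (fderiv ℝ g) x := h1.differentiableAt one_ne_zero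
  have h3 : DifferentiableAt ℝ (fun y => fderiv ℝ g y (1:ℝ)) x :=
    ((ContinuousLinearMap.apply ℝ F (1:ℝ)).differentiable.differentiableAt).comp x h2
  have h4 : DifferentiableAt ℝ (fun y => deriv g y) x := h3
  exact h4.hasDerivAt

lemma eq_zero_of_ode {D a : ℝ → ℝ} {K r : ℝ} (hK : 0 ≤ K) (hr : 0 < r)
    (hD : ∀ x ∈ Ioc (0:ℝ) r, HasDerivAt D (a x * D x) x)
    (hbound : ∀ x ∈ Ioc (0:ℝ) r, |a x| ≤ K)
    (hlim : Tendsto D (𝓝[>] (0:ℝ)) (𝓝 0)) : D r = 0 := by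
  have key : ∀ ε ∈ Ioo (0:ℝ) r, |D r| ≤ |D ε| * Real.exp (K * r) := by
    intro ε hε
    have hsub : Icc ε r ⊆ Ioc 0 r := fun x hx => ⟨lt_of_lt_of_le hε.1 hx.1, hx.2⟩
    have hcont : ContinuousOn D (Icc ε r) := fun x hx =>
      (hD x (hsub hx)).continuousAt.continuousWithinAt
    have hder : ∀ x ∈ Ico ε r, HasDerivWithinAt D (a x * D x) (Ici x) x := fun x hx =>
      (hD x (hsub ⟨hx.1, hx.2.le⟩)).hasDerivWithinAt
    have hb : ∀ x ∈ Ico ε r, ‖a x * D x‖ ≤ K * ‖D x‖ + 0 := by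
      intro x hx
      rw [add_zero, Real.norm_eq_abs, Real.norm_eq_abs, abs_mul]
      exact mul_le_mul_of_nonneg_right (hbound x (hsub ⟨hx.1, hx.2.le⟩)) (abs_nonneg _)
    have := norm_le_gronwallBound_of_norm_deriv_right_le hcont hder le_rfl hb r
      (right_mem_Icc.2 hε.2.le)
    rw [gronwallBound_ε0] at this
    calc |D r| ≤ ‖D ε‖ * Real.exp (K * (r - ε)) := this
      _ ≤ |D ε| * Real.exp (K * r) := by
          rw [Real.norm_eq_abs]
          exact mul_le_mul_of_nonneg_left
            (Real.exp_le_exp.2 (by nlinarith [hε.1])) (abs_nonneg _)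
  have htend : Tendsto (fun ε => |D ε| * Real.exp (K * r)) (𝓝[>] (0:ℝ))
      (𝓝 (|(0:ℝ)| * Real.exp (K * r))) :=
    (hlim.abs).mul_const _
  rw [abs_zero, zero_mul] at htend
  have hev : ∀ᶠ ε in 𝓝[>] (0:ℝ), |D r| ≤ |D ε| * Real.exp (K * r) := by
    filter_upwards [Ioo_mem_nhdsGT_of_mem (left_mem_Ico.2 hr)] with ε hε
    exact key ε hε
  have : |D r| ≤ 0 := ge_of_tendsto htend hev
  exact abs_nonpos_iff.1 this

end EKG

set_option maxRecDepth 100000 in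
set_option maxHeartbeats 2000000 in
open EKG Set Filter Topology in
theorem stmt_15 (M V : ℝ → ℝ → ℝ) (f p : ℝ → ℝ → ℂ) (μ₀ Υ : ℝ)
    (hμ₀ : 0 < μ₀) (hΥ : 0 < Υ)
    (hMsmooth : ContDiffOn ℝ (⊤ : ℕ∞) (Function.uncurry M) (Set.univ ×ˢ Set.Ici 0))
    (hVsmooth : ContDiffOn ℝ (⊤ : ℕ∞) (Function.uncurry V) (Set.univ ×ˢ Set.Ici 0))
    (hfsmooth : ContDiffOn ℝ (⊤ : ℕ∞) (Function.uncurry f) (Set.univ ×ˢ Set.Ici 0))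
    (hpsmooth : ContDiffOn ℝ (⊤ : ℕ∞) (Function.uncurry p) (Set.univ ×ˢ Set.Ici 0))
    (hM0 : ∀ t : ℝ, M t 0 = 0)
    (h2M : ∀ t : ℝ, ∀ r > (0:ℝ), 2 * M t r < r)
    (hMr : ∀ t : ℝ, ∀ r > (0:ℝ),
      deriv (fun r' => M t r') r =
        4 * π * r ^ 2 * μ₀ * (‖f t r‖ ^ 2 +
          Phi M t r * (‖deriv (fun r' => f t r') r‖ ^ 2 + ‖p t r‖ ^ 2) / Υ ^ 2))
    (hVr : ∀ t : ℝ, ∀ r > (0:ℝ),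
      deriv (fun r' => V t r') r =
        (Phi M t r)⁻¹ * (M t r / r ^ 2 -
          4 * π * r * μ₀ * (‖f t r‖ ^ 2 -
            Phi M t r * (‖deriv (fun r' => f t r') r‖ ^ 2 + ‖p t r‖ ^ 2) / Υ ^ 2)))
    (hft : ∀ t : ℝ, ∀ r > (0:ℝ),
      deriv (fun t' => f t' r) t =
        p t r * (Real.exp (V t r) : ℂ) * (Real.sqrt (Phi M t r) : ℂ))
    (hpt : ∀ t : ℝ, ∀ r > (0:ℝ),
      deriv (fun t' => p t' r) t =
        (Real.exp (V t r) : ℂ) *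
          (-(Υ : ℂ) ^ 2 * f t r * ((Real.sqrt (Phi M t r) : ℂ))⁻¹ +
            2 * deriv (fun r' => f t r') r / (r : ℂ) * (Real.sqrt (Phi M t r) : ℂ)) +
        deriv (fun r' =>
          (Real.exp (V t r') : ℂ) * deriv (fun s => f t s) r' *
            (Real.sqrt (Phi M t r') : ℂ)) r) :
    ∀ t : ℝ, ∀ r > (0:ℝ),
      deriv (fun t' => M t' r) t =
        8 * π * r ^ 2 * μ₀ * Real.exp (V t r) / Υ ^ 2 *
          Real.sqrt (Phi M t r) ^ 3 *
          (deriv (fun r' => f t r') r * (starRingEnd ℂ) (p t r)).re := by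
  intro t r hr
  have hS : (Set.univ ×ˢ Set.Ici 0 : Set (ℝ × ℝ)) = S := rfl
  rw [hS] at hMsmooth hVsmooth hfsmooth hpsmooth
  rw [← sub_eq_zero]
  set D : ℝ → ℝ := fun x =>
    deriv (fun t' => M t' x) t -
      8 * π * x ^ 2 * μ₀ * Real.exp (V t x) / Υ ^ 2 *
        Real.sqrt (Phi M t x) ^ 3 *
        (deriv (fun r' => f t r') x * (starRingEnd ℂ) (p t x)).re with hD_def
  show D r = 0
  set aa : ℝ → ℝ := fun x =>
    -(8 * π * x * μ₀ *
      (‖deriv (fun r' => f t r') x‖ ^ 2 + ‖p t x‖ ^ 2) / Υ ^ 2) with haa_def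
  -- the bound on `aa`
  obtain ⟨K, hK0, hKb⟩ : ∃ K : ℝ, 0 ≤ K ∧ ∀ x ∈ Ioc (0:ℝ) r, |aa x| ≤ K := by
    have hline : ContinuousOn (fun r' : ℝ => ((t:ℝ), r')) (Ici 0) :=
      Continuous.continuousOn (by continuity)
    have hcont1 : ContinuousOn
        (fun x : ℝ => fderivWithin ℝ (Function.uncurry f) S (t, x) ((0:ℝ), (1:ℝ)))
        (Ici 0) := contOn_partial hfsmooth t (0, 1)
    have hcontp : ContinuousOn (fun x : ℝ => p t x) (Ici 0) :=
      hpsmooth.continuousOn.comp hline (fun x hx => mem_S hx)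
    have hg : ContinuousOn (fun x : ℝ => 8 * π * x * μ₀ *
        (‖fderivWithin ℝ (Function.uncurry f) S (t, x) ((0:ℝ), (1:ℝ))‖ ^ 2
          + ‖p t x‖ ^ 2) / Υ ^ 2) (Ici 0) := by
      apply ContinuousOn.div_const
      exact ((continuousOn_const.mul continuousOn_id).mul continuousOn_const).mul
        ((hcont1.norm.pow 2).add (hcontp.norm.pow 2))
    obtain ⟨K, hKb⟩ := (isCompact_Icc (a := (0:ℝ)) (b := r)).exists_bound_of_continuousOn
      (hg.mono Icc_subset_Ici_self)
    refine ⟨max K 0, le_max_right _ _, ?_⟩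
    intro x hx
    have hx0 : (0:ℝ) < x := hx.1
    have haax : aa x = -(8 * π * x * μ₀ *
        (‖fderivWithin ℝ (Function.uncurry f) S (t, x) ((0:ℝ), (1:ℝ))‖ ^ 2
          + ‖p t x‖ ^ 2) / Υ ^ 2) := by
      simp only [haa_def]
      rw [deriv_snd_eq hfsmooth hx0]
    rw [haax, abs_neg]
    refine le_trans ?_ (le_max_left _ _)
    have hb2 := hKb x ⟨hx0.le, hx.2⟩
    rwa [Real.norm_eq_abs] at hb2
  -- the ODE
  have hODE : ∀ x ∈ Ioc (0:ℝ) r, HasDerivAt D (aa x * D x) x := by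
    intro x hx
    have hx0 : (0:ℝ) < x := hx.1
    have hxne : x ≠ 0 := hx0.ne'
    have hφpos : 0 < Phi M t x := by
      have h2m := h2M t x hx0
      simp only [Phi]
      rw [sub_pos, div_lt_one hx0]
      exact h2m
    have hsne : Real.sqrt (Phi M t x) ≠ 0 := (Real.sqrt_pos.2 hφpos).ne'
    have hcM := contDiffAt_interior hMsmooth (t := t) hx0
    have hcV := contDiffAt_interior hVsmooth (t := t) hx0
    have hcf := contDiffAt_interior hfsmooth (t := t) hx0
    have hcp := contDiffAt_interior hpsmooth (t := t) hx0
    have hdM := hcM.differentiableAt (by simp)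
    have hdV := hcV.differentiableAt (by simp)
    have hdf := hcf.differentiableAt (by simp)
    have hdp := hcp.differentiableAt (by simp)
    have hM' : HasDerivAt (fun r' => M t r') (deriv (fun r' => M t r') x) x := hasDerivAt_snd' M hdM
    have hV' : HasDerivAt (fun r' => V t r') (deriv (fun r' => V t r') x) x := hasDerivAt_snd' V hdV
    have hp' : HasDerivAt (fun r' => p t r') (deriv (fun r' => p t r') x) x := hasDerivAt_snd' p hdp
    have hcf_slice : ContDiffAt ℝ (⊤ : ℕ∞) (fun s => f t s) x := by
      have hline : ContDiffAt ℝ (⊤ : ℕ∞) (fun r' : ℝ => ((t:ℝ), r')) x :=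
        (contDiff_const.prodMk contDiff_id).contDiffAt
      exact hcf.comp x hline
    have hf'' : HasDerivAt (fun r' => deriv (fun s => f t s) r') (deriv (fun r' => deriv (fun s => f t s) r') x) x :=
      hasDerivAt_deriv_of_contDiffAt hcf_slice
    have hφ' : HasDerivAt (fun r' => Phi M t r')
        (-((2 * (deriv (fun r' => M t r') x) * x - 2 * M t x * 1) / x ^ 2)) x :=
      ((hM'.const_mul 2).div (hasDerivAt_id x) hxne).const_sub 1
    have hs' : HasDerivAt (fun r' => Real.sqrt (Phi M t r')) (-((2 * (deriv (fun r' => M t r') x) * x - 2 * M t x * 1) / x ^ 2) / (2 * Real.sqrt (Phi M t x))) x :=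
      hφ'.sqrt hφpos.ne'
    have hexp' : HasDerivAt (fun r' => Real.exp (V t r')) (Real.exp (V t x) * (deriv (fun r' => V t r') x)) x := hV'.exp
    have hA : HasDerivAt (fun r' =>
        (Real.exp (V t r') : ℂ) * deriv (fun s => f t s) r' *
          (Real.sqrt (Phi M t r') : ℂ)) (((((Real.exp (V t x) * (deriv (fun r' => V t r') x) : ℝ) : ℂ)) * (deriv (fun r' => f t r') x) + (((Real.exp (V t x) : ℝ) : ℂ)) * (deriv (fun r' => deriv (fun s => f t s) r') x)) * ((Real.sqrt (Phi M t x) : ℝ) : ℂ) + (((Real.exp (V t x) : ℝ) : ℂ)) * (deriv (fun r' => f t r') x) * ((-((2 * (deriv (fun r' => M t r') x) * x - 2 * M t x * 1) / x ^ 2) / (2 * Real.sqrt (Phi M t x)) : ℝ) : ℂ)) x :=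
      (hexp'.ofReal_comp.mul hf'').mul hs'.ofReal_comp
    have hB : HasDerivAt (fun r' =>
        p t r' * (Real.exp (V t r') : ℂ) * (Real.sqrt (Phi M t r') : ℂ)) (((deriv (fun r' => p t r') x) * ((Real.exp (V t x) : ℝ) : ℂ) + (p t x) * ((Real.exp (V t x) * (deriv (fun r' => V t r') x) : ℝ) : ℂ)) * ((Real.sqrt (Phi M t x) : ℝ) : ℂ) + (p t x) * ((Real.exp (V t x) : ℝ) : ℂ) * ((-((2 * (deriv (fun r' => M t r') x) * x - 2 * M t x * 1) / x ^ 2) / (2 * Real.sqrt (Phi M t x)) : ℝ) : ℂ)) x :=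
      (hp'.mul hexp'.ofReal_comp).mul hs'.ofReal_comp
    have hWt : HasDerivAt (fun t' => M t' x) (deriv (fun t' => M t' x) t) t := hasDerivAt_fst' M hdM
    have hφT : HasDerivAt (fun t' => Phi M t' x) (-(2 * (deriv (fun t' => M t' x) t) / x)) t :=
      ((hWt.const_mul 2).div_const x).const_sub 1
    have hfT : HasDerivAt (fun t' => f t' x)
        (p t x * (Real.exp (V t x) : ℂ) * (Real.sqrt (Phi M t x) : ℂ)) t := by
      have h0 := hasDerivAt_fst' f hdf
      rwa [hft t x hx0] at h0
    have hfrT : HasDerivAt (fun t' => deriv (fun r' => f t' r') x) (((deriv (fun r' => p t r') x) * ((Real.exp (V t x) : ℝ) : ℂ) + (p t x) * ((Real.exp (V t x) * (deriv (fun r' => V t r') x) : ℝ) : ℂ)) * ((Real.sqrt (Phi M t x) : ℝ) : ℂ) + (p t x) * ((Real.exp (V t x) : ℝ) : ℂ) * ((-((2 * (deriv (fun r' => M t r') x) * x - 2 * M t x * 1) / x ^ 2) / (2 * Real.sqrt (Phi M t x)) : ℝ) : ℂ)) t := by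
      have hmix := mixed' f hcf
      have heq : (fun r' => deriv (fun t' => f t' r') t) =ᶠ[𝓝 x]
          (fun r' => p t r' * (Real.exp (V t r') : ℂ) * (Real.sqrt (Phi M t r') : ℂ)) := by
        filter_upwards [Ioi_mem_nhds hx0] with r' hr'
        exact hft t r' hr'
      rw [heq.deriv_eq, hB.deriv] at hmix
      exact hmix
    have hpT : HasDerivAt (fun t' => p t' x)
        ((Real.exp (V t x) : ℂ) *
          (-(Υ : ℂ) ^ 2 * f t x * ((Real.sqrt (Phi M t x) : ℂ))⁻¹ +
            2 * (deriv (fun r' => f t r') x) / (x : ℂ) * (Real.sqrt (Phi M t x) : ℂ)) + (((((Real.exp (V t x) * (deriv (fun r' => V t r') x) : ℝ) : ℂ)) * (deriv (fun r' => f t r') x) + (((Real.exp (V t x) : ℝ) : ℂ)) * (deriv (fun r' => deriv (fun s => f t s) r') x)) * ((Real.sqrt (Phi M t x) : ℝ) : ℂ) + (((Real.exp (V t x) : ℝ) : ℂ)) * (deriv (fun r' => f t r') x) * ((-((2 * (deriv (fun r' => M t r') x) * x - 2 * M t x * 1) / x ^ 2) / (2 * Real.sqrt (Phi M t x)) : ℝ)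 : ℂ))) t := by
      have h0 := hasDerivAt_fst' p hdp
      rwa [hpt t x hx0, hA.deriv] at h0
    have hn1 := hasDerivAt_norm_sq hfT
    have hn2 := hasDerivAt_norm_sq hfrT
    have hn3 := hasDerivAt_norm_sq hpT
    have hRHS := (hn1.add ((hφT.mul (hn2.add hn3)).div_const (Υ ^ 2))).const_mul
      (4 * π * x ^ 2 * μ₀)
    have hmixM := mixed M hcM
    have hfun : (fun t' : ℝ => deriv (fun r' => M t' r') x) = (fun t' : ℝ =>
        4 * π * x ^ 2 * μ₀ * (‖f t' x‖ ^ 2 +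
          Phi M t' x * (‖deriv (fun r' => f t' r') x‖ ^ 2 + ‖p t' x‖ ^ 2) / Υ ^ 2)) :=
      funext fun t' => hMr t' x hx0
    rw [hfun] at hmixM
    have hderEq : deriv (fun t' : ℝ =>
        4 * π * x ^ 2 * μ₀ * (‖f t' x‖ ^ 2 +
          Phi M t' x * (‖deriv (fun r' => f t' r') x‖ ^ 2 + ‖p t' x‖ ^ 2) / Υ ^ 2)) t
        = _ := hRHS.deriv
    rw [hderEq] at hmixM
    have hre := hasDerivAt_re (hf''.mul hp'.star)
    have hpoly := ((((hasDerivAt_pow 2 x).const_mul (8 * π)).mul_const μ₀).mul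
      hexp').div_const (Υ ^ 2)
    have hs3 := hs'.fun_pow 3
    have hFnD := (hpoly.mul hs3).mul hre
    refine hasDerivAt_congr_deriv (hmixM.sub hFnD) ?_
    simp only [haa_def, hD_def]
    rw [hMr t x hx0, hVr t x hx0]
    set sv := Real.sqrt (Phi M t x) with hsv
    rw [show Phi M t x = sv ^ 2 by rw [hsv, Real.sq_sqrt hφpos.le]]
    rw [show M t x = x * (1 - sv ^ 2) / 2 by
      rw [hsv, Real.sq_sqrt hφpos.le]; simp only [Phi]; field_simp; ring]
    set E := Real.exp (V t x) with hE
    set F0 := f t x with hF0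
    set G := deriv (fun r' => f t r') x with hG
    set H := deriv (fun r' => deriv (fun s => f t s) r') x with hH
    set P := p t x with hP
    set Q := deriv (fun r' => p t r') x with hQ
    set W := deriv (fun t' => M t' x) t with hW
    simp only [Complex.star_def, div_eq_mul_inv, Pi.add_apply, Pi.mul_apply, Nat.cast_ofNat,
      ← Complex.ofReal_inv, ← Complex.ofReal_pow, norm_sq_complex,
      Complex.mul_re, Complex.mul_im, Complex.add_re, Complex.add_im,
      Complex.sub_re, Complex.sub_im, Complex.neg_re, Complex.neg_im,
      Complex.conj_re, Complex.conj_im, Complex.ofReal_re, Complex.ofReal_im,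
      Complex.re_ofNat, Complex.im_ofNat]
    field_simp
    ring
  -- the boundary limit
  have hlim : Tendsto D (𝓝[>] (0:ℝ)) (𝓝 0) := by
    have hw : Tendsto (fun x => deriv (fun t' => M t' x) t) (𝓝[>] (0:ℝ)) (𝓝 0) := by
      have h1 := tendsto_partial_fst hMsmooth t
      have h2 : fderivWithin ℝ (Function.uncurry M) S (t, 0) (1, 0) = 0 := by
        have hb := hasDerivAt_fst_boundary hMsmooth t
        have hc : HasDerivAt (fun t' : ℝ => M t' 0) 0 t := by
          have he : (fun t' : ℝ => M t' 0) = fun _ => (0:ℝ) := funext fun t' => hM0 t'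
          rw [he]; exact hasDerivAt_const t 0
        exact hb.unique hc
      rwa [h2] at h1
    have hV0 : Tendsto (fun x => Real.exp (V t x)) (𝓝[>] (0:ℝ)) (𝓝 (Real.exp (V t 0))) :=
      (Real.continuous_exp.tendsto _).comp (tendsto_val hVsmooth t)
    have hphi : Tendsto (fun x => Phi M t x) (𝓝[>] (0:ℝ))
        (𝓝 (1 - 2 * fderivWithin ℝ (Function.uncurry M) S (t, 0) (0, 1))) := by
      have h1 := tendsto_slope_boundary hMsmooth t (hM0 t)
      have h2 := tendsto_const_nhds (α := ℝ) (x := (1:ℝ)) |>.sub (h1.const_mul 2)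
      refine h2.congr ?_
      intro x
      simp only [Phi, smul_eq_mul]
      ring
    have hsq : Tendsto (fun x => Real.sqrt (Phi M t x) ^ 3) (𝓝[>] (0:ℝ))
        (𝓝 (Real.sqrt (1 - 2 * fderivWithin ℝ (Function.uncurry M) S (t, 0) (0, 1)) ^ 3)) :=
      ((Real.continuous_sqrt.tendsto _).comp hphi).pow 3
    have hfr := tendsto_partial_snd hfsmooth t
    have hptend := tendsto_val hpsmooth t
    have hRe : Tendsto (fun x => (deriv (fun r' => f t r') x * (starRingEnd ℂ) (p t x)).re)
        (𝓝[>] (0:ℝ))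
        (𝓝 ((fderivWithin ℝ (Function.uncurry f) S (t, 0) (0, 1) *
          (starRingEnd ℂ) (p t 0)).re)) :=
      (Complex.continuous_re.tendsto _).comp
        (hfr.mul ((RCLike.continuous_conj.tendsto _).comp hptend))
    have hx2 : Tendsto (fun x : ℝ => x ^ 2) (𝓝[>] (0:ℝ)) (𝓝 ((0:ℝ) ^ 2)) :=
      ((continuous_pow 2).tendsto 0).mono_left nhdsWithin_le_nhds
    have hpoly : Tendsto (fun x : ℝ => 8 * π * x ^ 2 * μ₀ * Real.exp (V t x) / Υ ^ 2)
        (𝓝[>] (0:ℝ)) (𝓝 (8 * π * (0:ℝ) ^ 2 * μ₀ * Real.exp (V t 0) / Υ ^ 2)) :=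
      (((tendsto_const_nhds.mul hx2).mul_const μ₀).mul hV0).div_const (Υ ^ 2)
    have hFn := (hpoly.mul hsq).mul hRe
    have hwF := hw.sub hFn
    simp only [hD_def]
    simpa using hwF
  exact eq_zero_of_ode hK0 hr hODE hKb hlim

end
end
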